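/- arXiv:1411.1890 — 10 statements merged into one kernel-verified Lean document; each statement's English description precedes it below -/
import Mathlib

section
/- Let P be a partially ordered set, x ∈ P, and (x_n) a sequence in P. Then (x_n) converges to x with respect to the sequential order topology τ_os(P) if and only if every subsequence of (x_n) has a further subsequence that order converges to x. -/
/-- A net `x`, indexed by a set with relation `r`, *order converges* to `l` in a poset if it is
squeezed between an increasing net with supremum `l` and a decreasing net with infimum `l`. -/
def OrderConvNet {ι P : Type*} (r : ι → ι → Prop) [Preorder P] (x : ι → P) (l : P) : Prop :=
  ∃ y z : ι → P,
    (∀ i j, r i j → y i ≤ y j) ∧ (∀ i j, r i j → z j ≤ z i) ∧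
    (∀ i, y i ≤ x i ∧ x i ≤ z i) ∧
    IsLUB (Set.range y) l ∧ IsGLB (Set.range z) l

/-- Order convergence of a sequence in a poset. -/
def SeqOrderConv {P : Type*} [Preorder P] (x : ℕ → P) (l : P) : Prop :=
  OrderConvNet (· ≤ · : ℕ → ℕ → Prop) x l

/-- The sequential order topology `τ_os(P)`: the finest topology on `P` such that every order
convergent sequence converges topologically to its order limit.  Its closed sets are exactly the
sequentially order closed sets. -/
def seqOrderTop (P : Type*) [Preorder P] : TopologicalSpace P :=
  sInf {t : TopologicalSpace P | ∀ (x : ℕ → P) (l : P), SeqOrderConv x l →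
    Filter.Tendsto x Filter.atTop (@nhds P t l)}

/-!
Order convergence implies `τ_os`-convergence, and `τ_os` convergence of sequences is detected by
subsequences, which gives one direction. Conversely let `a → l` in `τ_os`. Since `Iic b` and
`Ici b` are sequentially order closed, every order limit of a subsequence of `a` is equivalent
to `l`. If no subsequence of `a` order converges to `l`, then none order converges at all, and
only finitely many terms are equivalent to `l`. A sequence in the set of points equivalent to
terms of a tail of `a` either revisits one term infinitely often or runs through a subsequence
of `a`; so that set is sequentially order closed, hence `τ_os`-closed. It contains the tail but
not `l`, contradicting `a → l`.
-/

open Filter Set Topology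

theorem exists_const_subseq_or_strictMono_subseq (n : ℕ → ℕ) :
    (∃ m, ∃ σ : ℕ → ℕ, StrictMono σ ∧ ∀ k, n (σ k) = m) ∨
      ∃ σ : ℕ → ℕ, StrictMono σ ∧ StrictMono (n ∘ σ) := by
  by_cases h : ∃ m, (n ⁻¹' {m}).Infinite
  · obtain ⟨m, hm⟩ := h
    exact .inl ⟨m, extraction_of_frequently_atTop (Nat.frequently_atTop_iff_infinite.2 hm)⟩
  · simp only [not_exists, Set.not_infinite] at h
    have hn : Tendsto n atTop atTop := by
      rw [← Nat.cofinite_eq_atTop]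
      exact Tendsto.cofinite_of_finite_preimage_singleton fun m => (h m).to_subtype
    exact .inr (strictMono_subseq_of_tendsto_atTop hn)

section Order

variable {P : Type*} [Preorder P] {s t : ℕ → P} {q l b : P}

namespace SeqOrderConv

theorem comp_strictMono (h : SeqOrderConv s q) {φ : ℕ → ℕ} (hφ : StrictMono φ) :
    SeqOrderConv (s ∘ φ) q := by
  obtain ⟨y, z, hy, hz, hyz, hy_lub, hz_glb⟩ := h
  refine ⟨y ∘ φ, z ∘ φ, fun i j hij => hy _ _ (hφ.monotone hij),
    fun i j hij => hz _ _ (hφ.monotone hij), fun i => hyz (φ i), ?_, ?_⟩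
  · rwa [isLUB_congr
      (Monotone.upperBounds_range_comp_tendsto_atTop (f := y) hy hφ.tendsto_atTop)]
  · rwa [isGLB_congr
      (Antitone.lowerBounds_range_comp_tendsto_atTop (f := z) hz hφ.tendsto_atTop)]

theorem congr (h : SeqOrderConv s q) (hst : ∀ n, AntisymmRel (· ≤ ·) (s n) (t n))
    (hql : AntisymmRel (· ≤ ·) q l) : SeqOrderConv t l := by
  obtain ⟨y, z, hy, hz, hyz, hy_lub, hz_glb⟩ := h
  exact ⟨y, z, hy, hz, fun n => ⟨(hyz n).1.trans (hst n).1, (hst n).2.trans (hyz n).2⟩,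
    (isLUB_congr_of_antisymmRel hql).1 hy_lub, (isGLB_congr_of_antisymmRel hql).1 hz_glb⟩

theorem le_of_forall_le (h : SeqOrderConv s q) (hb : ∀ n, s n ≤ b) : q ≤ b := by
  obtain ⟨y, z, -, -, hyz, hy_lub, -⟩ := h
  exact hy_lub.2 (forall_mem_range.2 fun n => (hyz n).1.trans (hb n))

theorem ge_of_forall_ge (h : SeqOrderConv s q) (hb : ∀ n, b ≤ s n) : b ≤ q := by
  obtain ⟨y, z, -, -, hyz, -, hz_glb⟩ := h
  exact hz_glb.2 (forall_mem_range.2 fun n => (hb n).trans (hyz n).2)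

end SeqOrderConv

theorem seqOrderConv_const (l : P) : SeqOrderConv (fun _ => l) l :=
  ⟨fun _ => l, fun _ => l, fun _ _ _ => le_rfl, fun _ _ _ => le_rfl, fun _ => ⟨le_rfl, le_rfl⟩,
    by simp, by simp⟩

def IsSeqOrderClosed (F : Set P) : Prop :=
  ∀ (s : ℕ → P) (q : P), (∀ n, s n ∈ F) → SeqOrderConv s q → q ∈ F

theorem isSeqOrderClosed_Iic (b : P) : IsSeqOrderClosed (Iic b) :=
  fun _ _ hs h => h.le_of_forall_le hs

theorem isSeqOrderClosed_Ici (b : P) : IsSeqOrderClosed (Ici b) :=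
  fun _ _ hs h => h.ge_of_forall_ge hs

theorem SeqOrderConv.eventually_notMem (h : SeqOrderConv s q) {F : Set P}
    (hF : IsSeqOrderClosed F) (hq : q ∉ F) : ∀ᶠ n in atTop, s n ∉ F := by
  by_contra hfreq
  obtain ⟨φ, hφ, hφF⟩ := extraction_of_frequently_atTop (not_eventually.1 hfreq)
  exact hq (hF _ _ (fun n => not_not.1 (hφF n)) (h.comp_strictMono hφ))

theorem isSeqOrderClosed_of_forall_not_seqOrderConv {a : ℕ → P}
    (ha : ∀ ψ q, StrictMono ψ → ¬SeqOrderConv (a ∘ ψ) q) :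
    IsSeqOrderClosed {p | ∃ m, AntisymmRel (· ≤ ·) p (a m)} := by
  intro s q hs h
  choose n hn using hs
  rcases exists_const_subseq_or_strictMono_subseq n with ⟨m, σ, hσ, hnσ⟩ | ⟨σ, hσ, hnσ⟩
  · have hσm : ∀ k, AntisymmRel (· ≤ ·) (s (σ k)) (a m) := fun k => hnσ k ▸ hn (σ k)
    exact ⟨m, (h.comp_strictMono hσ).le_of_forall_le fun k => (hσm k).1,
      (h.comp_strictMono hσ).ge_of_forall_ge fun k => (hσm k).2⟩
  · exact absurd ((h.comp_strictMono hσ).congr (fun k => hn (σ k)) .rfl) (ha _ q hnσ)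

end Order

section Topology

variable {P : Type*} [Preorder P] {s : ℕ → P} {q l : P}

attribute [local instance] seqOrderTop

theorem SeqOrderConv.tendsto (h : SeqOrderConv s l) : Tendsto s atTop (𝓝 l) := by
  rw [seqOrderTop, nhds_sInf]
  exact tendsto_iInf.2 fun t => tendsto_iInf.2 fun ht => ht s l h

abbrev seqOrderClosedTop (P : Type*) [Preorder P] : TopologicalSpace P :=
  .ofClosed {F | IsSeqOrderClosed F} (fun _ _ hs _ => hs 0)
    (fun _ hA _ _ hs h => mem_sInter.2 fun F hF => hA hF _ _ (fun n => hs n F hF) h)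
    (fun _ hA _ hB s _ hs h => by
      by_contra hq
      rw [mem_union, not_or] at hq
      obtain ⟨n, hnA, hnB⟩ :=
        ((h.eventually_notMem hA hq.1).and (h.eventually_notMem hB hq.2)).exists
      exact (hs n).elim hnA hnB)

theorem seqOrderTop_le_seqOrderClosedTop : seqOrderTop P ≤ seqOrderClosedTop P :=
  sInf_le fun s l h => (@tendsto_nhds P (seqOrderClosedTop P) ℕ l s atTop).2 fun U hU hl =>
    (h.eventually_notMem (F := Uᶜ) hU (not_not.2 hl)).mono fun _ => not_not.1

theorem IsSeqOrderClosed.isClosed {F : Set P} (hF : IsSeqOrderClosed F) : IsClosed F :=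
  ⟨TopologicalSpace.le_def.1 seqOrderTop_le_seqOrderClosedTop Fᶜ (by rwa [← compl_compl F] at hF)⟩

theorem SeqOrderConv.antisymmRel_of_tendsto (h : SeqOrderConv s q)
    (hs : Tendsto s atTop (𝓝 l)) : AntisymmRel (· ≤ ·) q l := by
  obtain ⟨y, z, hy, hz, hyz, hy_lub, hz_glb⟩ := h
  refine ⟨hy_lub.2 (forall_mem_range.2 fun i => ?_), hz_glb.2 (forall_mem_range.2 fun i => ?_)⟩
  · exact (isSeqOrderClosed_Ici (y i)).isClosed.mem_of_tendsto hs
      ((eventually_ge_atTop i).mono fun j hj => (hy i j hj).trans (hyz j).1)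
  · exact (isSeqOrderClosed_Iic (z i)).isClosed.mem_of_tendsto hs
      ((eventually_ge_atTop i).mono fun j hj => (hyz j).2.trans (hz i j hj))

theorem exists_subseq_seqOrderConv_of_tendsto {a : ℕ → P} (ha : Tendsto a atTop (𝓝 l)) :
    ∃ ψ : ℕ → ℕ, StrictMono ψ ∧ SeqOrderConv (a ∘ ψ) l := by
  by_contra! hno_subseq
  have hno_limit : ∀ ψ q, StrictMono ψ → ¬SeqOrderConv (a ∘ ψ) q := fun ψ q hψ h =>
    hno_subseq ψ hψ
      (h.congr (fun _ => .rfl) (h.antisymmRel_of_tendsto (ha.comp hψ.tendsto_atTop)))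
  obtain ⟨N, hN⟩ : ∃ N, ∀ m ≥ N, ¬AntisymmRel (· ≤ ·) (a m) l := by
    refine eventually_atTop.1 (not_frequently.1 fun hfreq => ?_)
    obtain ⟨ψ, hψ, hψl⟩ := extraction_of_frequently_atTop hfreq
    exact hno_subseq ψ hψ ((seqOrderConv_const l).congr (fun k => (hψl k).symm) .rfl)
  have hclosed := (isSeqOrderClosed_of_forall_not_seqOrderConv (a := fun m => a (m + N))
    fun ψ q hψ => hno_limit (fun k => ψ k + N) q (hψ.add_const N)).isClosed
  obtain ⟨m, hm⟩ := hclosed.mem_of_tendsto (ha.comp (tendsto_add_atTop_nat N))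
    (.of_forall fun m => ⟨m, .rfl⟩)
  exact hN (m + N) (Nat.le_add_left N m) hm.symm

end Topology

/-- A sequence converges to `x` w.r.t. the sequential order topology iff every subsequence has a
further subsequence order converging to `x`. -/
theorem stmt0 {P : Type*} [Preorder P] (x : ℕ → P) (l : P) :
    Filter.Tendsto x Filter.atTop (@nhds P (seqOrderTop P) l) ↔
      ∀ φ : ℕ → ℕ, StrictMono φ →
        ∃ ψ : ℕ → ℕ, StrictMono ψ ∧ SeqOrderConv (x ∘ φ ∘ ψ) l := by
  refine ⟨fun h φ hφ => exists_subseq_seqOrderConv_of_tendsto (h.comp hφ.tendsto_atTop),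
    fun h => tendsto_of_subseq_tendsto fun ns hns => ?_⟩
  obtain ⟨φ, hφ, hnsφ⟩ := strictMono_subseq_of_tendsto_atTop hns
  obtain ⟨ψ, hψ, hconv⟩ := h (ns ∘ φ) hnsφ
  exact ⟨φ ∘ ψ, hconv.tendsto⟩
end

section
/- Let P be a partially ordered set. Then the sequential order topology τ_os(P) equals the order topology τ_o(P) if and only if P is monotone order separable. -/
universe u

/-- The `atTop` filter of a directed index set given by the relation `r`. -/
def netAtTop {ι : Type*} (r : ι → ι → Prop) : Filter ι :=
  ⨅ i, Filter.principal {j | r i j}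

/-- The order topology `τ_o(P)`: the finest topology on `P` preserving order convergence of
nets. -/
def orderTop (P : Type u) [Preorder P] : TopologicalSpace P :=
  sInf {t : TopologicalSpace P | ∀ (ι : Type u) (r : ι → ι → Prop),
    IsPreorder ι r → IsDirected ι r → Nonempty ι →
    ∀ (x : ι → P) (l : P), OrderConvNet r x l →
      Filter.Tendsto x (netAtTop r) (@nhds P t l)}

/-- A poset is *monotone order separable* if every increasing net having a supremum admits an
increasing sequence of indices along which the supremum is the same, and dually for decreasing
nets and infima. -/
def MonotoneOrderSeparable (P : Type u) [Preorder P] : Prop :=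
  ∀ (ι : Type u) (r : ι → ι → Prop), IsPreorder ι r → IsDirected ι r → Nonempty ι →
    ∀ (x : ι → P) (l : P),
      ((∀ i j, r i j → x i ≤ x j) → IsLUB (Set.range x) l →
        ∃ γ : ℕ → ι, (∀ m n, m ≤ n → r (γ m) (γ n)) ∧ IsLUB (Set.range (x ∘ γ)) l) ∧
      ((∀ i j, r i j → x j ≤ x i) → IsGLB (Set.range x) l →
        ∃ γ : ℕ → ι, (∀ m n, m ≤ n → r (γ m) (γ n)) ∧ IsGLB (Set.range (x ∘ γ)) l)

-- ==================== auxiliary material ====================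

open Filter Set

namespace StmtAux

variable {P : Type u} [Preorder P]

/-- A set is sequentially order closed. -/
def SeqOClosed (C : Set P) : Prop :=
  ∀ (x : ℕ → P) (l : P), SeqOrderConv x l → (∀ n, x n ∈ C) → l ∈ C

lemma seqOrderConv_comp {x : ℕ → P} {l : P} (h : SeqOrderConv x l) {φ : ℕ → ℕ}
    (hφ : Monotone φ) (hle : ∀ n, n ≤ φ n) : SeqOrderConv (x ∘ φ) l := by
  obtain ⟨y, z, hy, hz, hyz, hly, hlz⟩ := h
  refine ⟨y ∘ φ, z ∘ φ, fun i j hij => hy _ _ (hφ hij), fun i j hij => hz _ _ (hφ hij),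
    fun i => hyz (φ i), ⟨?_, ?_⟩, ⟨?_, ?_⟩⟩
  · rintro p ⟨n, rfl⟩; exact hly.1 ⟨φ n, rfl⟩
  · intro b hb
    apply hly.2
    rintro p ⟨n, rfl⟩
    exact le_trans (hy n (φ n) (hle n)) (hb ⟨n, rfl⟩)
  · rintro p ⟨n, rfl⟩; exact hlz.1 ⟨φ n, rfl⟩
  · intro b hb
    apply hlz.2
    rintro p ⟨n, rfl⟩
    exact le_trans (hb ⟨n, rfl⟩) (hz n (φ n) (hle n))

/-- The topology whose closed sets are the sequentially order closed sets. -/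
def seqTop (P : Type u) [Preorder P] : TopologicalSpace P where
  IsOpen U := SeqOClosed Uᶜ
  isOpen_univ := by intro x l _ hx; simpa using hx 0
  isOpen_inter := by
    intro s t hs ht x l hconv hx
    by_cases hf : ∃ᶠ n in atTop, x n ∈ sᶜ
    · obtain ⟨φ, hφ, hφs⟩ := Filter.extraction_of_frequently_atTop hf
      have hl : l ∈ sᶜ :=
        hs (x ∘ φ) l (seqOrderConv_comp hconv hφ.monotone fun n => hφ.le_apply) hφs
      simp only [Set.mem_compl_iff, Set.mem_inter_iff, not_and]
      intro hls; exact absurd hls hl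
    · have hev : ∀ᶠ n in atTop, x n ∈ s := by
        have := (Filter.not_frequently.mp hf)
        filter_upwards [this] with n hn
        simpa using hn
      have hft : ∃ᶠ n in atTop, x n ∈ tᶜ := by
        refine Filter.Eventually.frequently (hev.mono fun n hn1 => ?_)
        have hn2 := hx n
        simp only [Set.mem_compl_iff, Set.mem_inter_iff, not_and] at hn2 ⊢
        exact hn2 hn1
      obtain ⟨φ, hφ, hφt⟩ := Filter.extraction_of_frequently_atTop hft
      have hl : l ∈ tᶜ :=
        ht (x ∘ φ) l (seqOrderConv_comp hconv hφ.monotone fun n => hφ.le_apply) hφt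
      simp only [Set.mem_compl_iff, Set.mem_inter_iff, not_and]
      intro _; exact hl
  isOpen_sUnion := by
    intro S hS x l hconv hx
    simp only [Set.compl_sUnion] at hx ⊢
    intro t ht
    rcases ht with ⟨u, hu, rfl⟩
    exact hS u hu x l hconv fun n => hx n _ ⟨u, hu, rfl⟩

lemma seqTop_conv : ∀ (x : ℕ → P) (l : P), SeqOrderConv x l →
    Filter.Tendsto x Filter.atTop (@nhds P (seqTop P) l) := by
  intro x l hconv
  letI := seqTop P
  rw [tendsto_nhds]
  intro U hU hlU
  by_contra hnot
  have hf : ∃ᶠ n in atTop, x n ∈ Uᶜ := by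
    have : ¬ ∀ᶠ n in atTop, x n ∈ U := hnot
    exact (Filter.not_eventually.mp this).mono fun n hn => hn
  obtain ⟨φ, hφ, hφU⟩ := Filter.extraction_of_frequently_atTop hf
  exact hU (x ∘ φ) l (seqOrderConv_comp hconv hφ.monotone fun n => hφ.le_apply) hφU hlU

lemma seqOrderTop_eq : seqOrderTop P = seqTop P := by
  refine le_antisymm (sInf_le seqTop_conv) (le_sInf ?_)
  intro t ht
  rw [TopologicalSpace.le_def]
  intro U hU
  show StmtAux.SeqOClosed Uᶜ
  intro x l hconv hx
  have htendsto : Filter.Tendsto x Filter.atTop (@nhds P t l) := ht x l hconv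
  have hclosed : @IsClosed P t Uᶜ := ⟨by rwa [compl_compl]⟩
  letI := t
  exact hclosed.mem_of_tendsto htendsto (Filter.Eventually.of_forall hx)

lemma isOpen_seq_iff {U : Set P} :
    @IsOpen P (seqOrderTop P) U ↔ SeqOClosed Uᶜ := by
  rw [seqOrderTop_eq]; exact Iff.rfl

lemma seqOrderTop_conv : ∀ (x : ℕ → P) (l : P), SeqOrderConv x l →
    Filter.Tendsto x Filter.atTop (@nhds P (seqOrderTop P) l) := by
  rw [seqOrderTop_eq]; exact seqTop_conv

lemma orderTop_conv {ι : Type u} (r : ι → ι → Prop) (h1 : IsPreorder ι r)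
    (h2 : IsDirected ι r) (h3 : Nonempty ι) (x : ι → P) (l : P) (hc : OrderConvNet r x l) :
    Filter.Tendsto x (netAtTop r) (@nhds P (orderTop P) l) := by
  unfold orderTop
  rw [nhds_sInf, Filter.tendsto_iInf]
  intro t
  rw [Filter.tendsto_iInf]
  intro ht
  exact ht ι r h1 h2 h3 x l hc

lemma seq_le_order : seqOrderTop P ≤ orderTop P := by
  apply sInf_le_sInf
  intro t ht x l hconv
  have hpre : IsPreorder (ULift.{u} ℕ) (fun a b => a.down ≤ b.down) :=
    { refl := fun a => le_refl _, trans := fun a b c hab hbc => le_trans hab hbc }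
  have hdir : IsDirected (ULift.{u} ℕ) (fun a b => a.down ≤ b.down) :=
    ⟨fun a b => ⟨⟨max a.down b.down⟩, le_max_left _ _, le_max_right _ _⟩⟩
  have hconv' : OrderConvNet (fun a b : ULift.{u} ℕ => a.down ≤ b.down) (x ∘ ULift.down) l := by
    obtain ⟨y, z, hy, hz, hyz, hly, hlz⟩ := hconv
    have hry : Set.range (y ∘ ULift.down) = Set.range y := by
      ext p
      constructor
      · rintro ⟨a, rfl⟩; exact ⟨a.down, rfl⟩
      · rintro ⟨n, rfl⟩; exact ⟨ULift.up n, rfl⟩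
    have hrz : Set.range (z ∘ ULift.down) = Set.range z := by
      ext p
      constructor
      · rintro ⟨a, rfl⟩; exact ⟨a.down, rfl⟩
      · rintro ⟨n, rfl⟩; exact ⟨ULift.up n, rfl⟩
    exact ⟨y ∘ ULift.down, z ∘ ULift.down, fun i j hij => hy _ _ hij,
      fun i j hij => hz _ _ hij, fun i => hyz i.down, hry ▸ hly, hrz ▸ hlz⟩
  have htend := ht (ULift.{u} ℕ) (fun a b => a.down ≤ b.down) hpre hdir ⟨⟨0⟩⟩
    (x ∘ ULift.down) l hconv'
  have hup : Filter.Tendsto (ULift.up : ℕ → ULift.{u} ℕ) Filter.atTop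
      (netAtTop (fun a b : ULift.{u} ℕ => a.down ≤ b.down)) := by
    unfold netAtTop
    rw [Filter.tendsto_iInf]
    intro i
    rw [Filter.tendsto_principal]
    filter_upwards [Filter.eventually_ge_atTop i.down] with n hn
    exact hn
  exact htend.comp hup

lemma rel_chain {ι : Type*} {r : ι → ι → Prop} (hpre : IsPreorder ι r) {f : ℕ → ι}
    (h : ∀ n, r (f n) (f (n + 1))) : ∀ m n, m ≤ n → r (f m) (f n) := by
  intro m n hmn
  induction n, hmn using Nat.le_induction with
  | base => exact hpre.refl (f m)
  | succ n hmn ih => exact hpre.trans _ _ _ ih (h n)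

lemma exists_dominating₂ {ι : Type*} {r : ι → ι → Prop} (hpre : IsPreorder ι r)
    (hdir : IsDirected ι r) (γ δ : ℕ → ι) :
    ∃ ε : ℕ → ι, (∀ m n, m ≤ n → r (ε m) (ε n)) ∧ (∀ n, r (γ n) (ε n)) ∧ (∀ n, r (δ n) (ε n)) := by
  have h3 : ∀ a b c : ι, ∃ d, r a d ∧ r b d ∧ r c d := by
    intro a b c
    obtain ⟨e, hae, hbe⟩ := directed_of r a b
    obtain ⟨d, hed, hcd⟩ := directed_of r e c
    exact ⟨d, hpre.trans _ _ _ hae hed, hpre.trans _ _ _ hbe hed, hcd⟩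
  choose f hf1 hf2 hf3 using h3
  refine ⟨fun n => Nat.rec (f (γ 0) (δ 0) (γ 0)) (fun n e => f (γ (n + 1)) (δ (n + 1)) e) n,
    ?_, ?_, ?_⟩
  · exact rel_chain hpre fun n => hf3 _ _ _
  · intro n; cases n with
    | zero => exact hf1 _ _ _
    | succ n => exact hf1 _ _ _
  · intro n; cases n with
    | zero => exact hf2 _ _ _
    | succ n => exact hf2 _ _ _

lemma exists_diagonal {ι : Type*} {r : ι → ι → Prop} (hpre : IsPreorder ι r)
    (hdir : IsDirected ι r) (γ : ℕ → ℕ → ι) :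
    ∃ δ : ℕ → ι, (∀ m n, m ≤ n → r (δ m) (δ n)) ∧ ∀ n k, ∃ m, r (γ n k) (δ m) := by
  obtain ⟨ε, hmono, hg, _⟩ := exists_dominating₂ hpre hdir
    (fun m => γ (Nat.unpair m).1 (Nat.unpair m).2) (fun m => γ (Nat.unpair m).1 (Nat.unpair m).2)
  refine ⟨ε, hmono, fun n k => ⟨Nat.pair n k, ?_⟩⟩
  have := hg (Nat.pair n k)
  rwa [Nat.unpair_pair] at this

lemma mem_netAtTop {ι : Type*} {r : ι → ι → Prop} (i : ι) {s : Set ι}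
    (h : ∀ j, r i j → j ∈ s) : s ∈ netAtTop r :=
  Filter.mem_iInf_of_mem i (by rwa [Filter.mem_principal])

lemma exists_of_mem_netAtTop {ι : Type*} {r : ι → ι → Prop} (hpre : IsPreorder ι r)
    (hdir : IsDirected ι r) (hne : Nonempty ι) {s : Set ι} (hs : s ∈ netAtTop r) :
    ∃ i, ∀ j, r i j → j ∈ s := by
  haveI := hne
  have hd : Directed (· ≥ ·) (fun i => Filter.principal {j | r i j}) := by
    intro i j
    obtain ⟨k, hik, hjk⟩ := directed_of r i j
    refine ⟨k, ?_, ?_⟩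
    · exact Filter.principal_mono.mpr fun m hm => hpre.trans _ _ _ hik hm
    · exact Filter.principal_mono.mpr fun m hm => hpre.trans _ _ _ hjk hm
  obtain ⟨i, hi⟩ := (Filter.mem_iInf_of_directed hd s).1 hs
  rw [Filter.mem_principal] at hi
  exact ⟨i, fun j hj => hi hj⟩

lemma key_up {ι : Type u} {r : ι → ι → Prop} (hpre : IsPreorder ι r) (hdir : IsDirected ι r)
    (hne : Nonempty ι) {x : ι → P} (hmono : ∀ i j, r i j → x i ≤ x j) {l : P}
    (hl : IsLUB (Set.range x) l) (heq : seqOrderTop P = orderTop P) :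
    ∃ γ : ℕ → ι, (∀ m n, m ≤ n → r (γ m) (γ n)) ∧ IsLUB (Set.range (x ∘ γ)) l := by
  by_contra hno
  push_neg at hno
  set C : Set P :=
    {p | ∃ γ : ℕ → ι, (∀ m n, m ≤ n → r (γ m) (γ n)) ∧ ∀ b, (∀ n, x (γ n) ≤ b) → p ≤ b} with hC
  have hxC : ∀ i, x i ∈ C := fun i =>
    ⟨fun _ => i, fun m n _ => hpre.refl i, fun b hb => hb 0⟩
  have hlC : l ∉ C := by
    rintro ⟨γ, hγ, hb⟩
    refine hno γ hγ ⟨?_, ?_⟩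
    · rintro p ⟨n, rfl⟩
      exact hl.1 ⟨γ n, rfl⟩
    · intro b hbub
      exact hb b fun n => hbub ⟨n, rfl⟩
  have hclosed : SeqOClosed C := by
    intro w p hconv hw
    obtain ⟨y, z, hy, hz, hyz, hlub, _⟩ := hconv
    choose Γ hΓmono hΓb using hw
    obtain ⟨δ, hδmono, hδdom⟩ := exists_diagonal hpre hdir Γ
    refine ⟨δ, hδmono, fun b hb => ?_⟩
    have hwb : ∀ n, w n ≤ b := by
      intro n
      refine hΓb n b fun k => ?_
      obtain ⟨m, hm⟩ := hδdom n k
      exact le_trans (hmono _ _ hm) (hb m)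
    refine hlub.2 ?_
    rintro q ⟨n, rfl⟩
    exact le_trans (hyz n).1 (hwb n)
  have hUopen : @IsOpen P (seqOrderTop P) Cᶜ := by
    rw [isOpen_seq_iff, compl_compl]
    exact hclosed
  have hnet : OrderConvNet r x l := by
    refine ⟨x, fun _ => l, hmono, fun _ _ _ => le_refl l, fun i => ⟨le_refl _, hl.1 ⟨i, rfl⟩⟩,
      hl, ⟨?_, ?_⟩⟩
    · rintro q ⟨i, rfl⟩; exact le_refl l
    · intro b hbl
      exact hbl ⟨hne.some, rfl⟩
  have htend : Filter.Tendsto x (netAtTop r) (@nhds P (seqOrderTop P) l) := by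
    rw [heq]
    exact orderTop_conv r hpre hdir hne x l hnet
  letI := seqOrderTop P
  rw [tendsto_nhds] at htend
  have hmem := htend Cᶜ hUopen hlC
  obtain ⟨i, hi⟩ := exists_of_mem_netAtTop hpre hdir hne hmem
  exact hi i (hpre.refl i) (hxC i)

lemma key_down {ι : Type u} {r : ι → ι → Prop} (hpre : IsPreorder ι r) (hdir : IsDirected ι r)
    (hne : Nonempty ι) {x : ι → P} (hmono : ∀ i j, r i j → x j ≤ x i) {l : P}
    (hl : IsGLB (Set.range x) l) (heq : seqOrderTop P = orderTop P) :
    ∃ γ : ℕ → ι, (∀ m n, m ≤ n → r (γ m) (γ n)) ∧ IsGLB (Set.range (x ∘ γ)) l := by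
  by_contra hno
  push_neg at hno
  set C : Set P :=
    {p | ∃ γ : ℕ → ι, (∀ m n, m ≤ n → r (γ m) (γ n)) ∧ ∀ b, (∀ n, b ≤ x (γ n)) → b ≤ p} with hC
  have hxC : ∀ i, x i ∈ C := fun i =>
    ⟨fun _ => i, fun m n _ => hpre.refl i, fun b hb => hb 0⟩
  have hlC : l ∉ C := by
    rintro ⟨γ, hγ, hb⟩
    refine hno γ hγ ⟨?_, ?_⟩
    · rintro p ⟨n, rfl⟩
      exact hl.1 ⟨γ n, rfl⟩
    · intro b hbub
      exact hb b fun n => hbub ⟨n, rfl⟩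
  have hclosed : SeqOClosed C := by
    intro w p hconv hw
    obtain ⟨y, z, hy, hz, hyz, _, hglb⟩ := hconv
    choose Γ hΓmono hΓb using hw
    obtain ⟨δ, hδmono, hδdom⟩ := exists_diagonal hpre hdir Γ
    refine ⟨δ, hδmono, fun b hb => ?_⟩
    have hwb : ∀ n, b ≤ w n := by
      intro n
      refine hΓb n b fun k => ?_
      obtain ⟨m, hm⟩ := hδdom n k
      exact le_trans (hb m) (hmono _ _ hm)
    refine hglb.2 ?_
    rintro q ⟨n, rfl⟩
    exact le_trans (hwb n) (hyz n).2
  have hUopen : @IsOpen P (seqOrderTop P) Cᶜ := by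
    rw [isOpen_seq_iff, compl_compl]
    exact hclosed
  have hnet : OrderConvNet r x l := by
    refine ⟨fun _ => l, x, fun _ _ _ => le_refl l, hmono, fun i => ⟨hl.1 ⟨i, rfl⟩, le_refl _⟩,
      ⟨?_, ?_⟩, hl⟩
    · rintro q ⟨i, rfl⟩; exact le_refl l
    · intro b hbl
      exact hbl ⟨hne.some, rfl⟩
  have htend : Filter.Tendsto x (netAtTop r) (@nhds P (seqOrderTop P) l) := by
    rw [heq]
    exact orderTop_conv r hpre hdir hne x l hnet
  letI := seqOrderTop P
  rw [tendsto_nhds] at htend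
  have hmem := htend Cᶜ hUopen hlC
  obtain ⟨i, hi⟩ := exists_of_mem_netAtTop hpre hdir hne hmem
  exact hi i (hpre.refl i) (hxC i)

lemma seqOrderTop_net_conv (hmos : MonotoneOrderSeparable P) :
    ∀ (ι : Type u) (r : ι → ι → Prop), IsPreorder ι r → IsDirected ι r → Nonempty ι →
      ∀ (x : ι → P) (l : P), OrderConvNet r x l →
        Filter.Tendsto x (netAtTop r) (@nhds P (seqOrderTop P) l) := by
  intro ι r hpre hdir hne x l hconv
  obtain ⟨y, z, hy, hz, hyz, hlub, hglb⟩ := hconv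
  obtain ⟨γ, hγm, hγl⟩ := (hmos ι r hpre hdir hne y l).1 hy hlub
  obtain ⟨δ, hδm, hδl⟩ := (hmos ι r hpre hdir hne z l).2 hz hglb
  obtain ⟨ε, hεm, hεγ, hεδ⟩ := exists_dominating₂ hpre hdir γ δ
  letI := seqOrderTop P
  rw [tendsto_nhds]
  intro U hU hlU
  by_contra hnot
  have hall : ∀ i, ∃ j, r i j ∧ x j ∉ U := by
    by_contra h'
    push_neg at h'
    obtain ⟨i, hi⟩ := h'
    exact hnot (mem_netAtTop i fun j hj => hi j hj)
  choose j hj1 hj2 using hall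
  have hseq : SeqOrderConv (fun n => x (j (ε n))) l := by
    refine ⟨fun n => y (ε n), fun n => z (ε n), fun m n hmn => hy _ _ (hεm m n hmn),
      fun m n hmn => hz _ _ (hεm m n hmn),
      fun n => ⟨le_trans (hy _ _ (hj1 (ε n))) (hyz (j (ε n))).1,
        le_trans (hyz (j (ε n))).2 (hz _ _ (hj1 (ε n)))⟩, ⟨?_, ?_⟩, ⟨?_, ?_⟩⟩
    · rintro q ⟨n, rfl⟩
      exact hlub.1 ⟨ε n, rfl⟩
    · intro b hb
      refine hγl.2 ?_
      rintro q ⟨n, rfl⟩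
      exact le_trans (hy _ _ (hεγ n)) (hb ⟨n, rfl⟩)
    · rintro q ⟨n, rfl⟩
      exact hglb.1 ⟨ε n, rfl⟩
    · intro b hb
      refine hδl.2 ?_
      rintro q ⟨n, rfl⟩
      exact le_trans (hb ⟨n, rfl⟩) (hz _ _ (hεδ n))
  have hcl : SeqOClosed Uᶜ := isOpen_seq_iff.1 hU
  exact hcl (fun n => x (j (ε n))) l hseq (fun n => hj2 (ε n)) hlU

end StmtAux

/-- The sequential order topology coincides with the order topology iff the poset is monotone
order separable. -/
theorem stmt1 {P : Type u} [Preorder P] :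
    seqOrderTop P = orderTop P ↔ MonotoneOrderSeparable P := by
  constructor
  · intro heq
    intro ι r hpre hdir hne x l
    exact ⟨fun hm hl => StmtAux.key_up hpre hdir hne hm hl heq,
      fun hm hl => StmtAux.key_down hpre hdir hne hm hl heq⟩
  · intro hmos
    refine le_antisymm StmtAux.seq_le_order ?_
    exact sInf_le (StmtAux.seqOrderTop_net_conv hmos)
end

section
/- Let X be a conditionally monotone σ-complete ordered vector space admitting a faithful normal positive linear functional f. Then X is monotone order separable. -/
/-!
Given a decreasing net `x` with infimum `l`, normality makes `f (x i) → f l` along the net. Since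
`ℝ` is first countable, countably many indices suffice to witness this convergence, and by
directedness they can be dominated by an increasing sequence `γ`. The infimum `m` of `x ∘ γ`
exists by σ-completeness, lies above `l`, and satisfies `f m ≤ f l`; a faithful functional is
strictly monotone, so `m = l`. Increasing nets are handled by negation.
-/

universe u

open Set Filter Topology

section DirectedRelation

variable {ι : Type*} {r : ι → ι → Prop}

lemma mem_netAtTop_iff [IsTrans ι r] [IsDirected ι r] [Nonempty ι] {s : Set ι} :
    s ∈ netAtTop r ↔ ∃ i, ∀ j, r i j → j ∈ s := by
  have hdir : Directed (· ≥ ·) fun i => 𝓟 {j | r i j} := fun i₁ i₂ => by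
    obtain ⟨k, hk₁, hk₂⟩ := directed_of r i₁ i₂
    exact ⟨k, principal_mono.2 fun j hj => _root_.trans hk₁ hj,
      principal_mono.2 fun j hj => _root_.trans hk₂ hj⟩
  simp only [netAtTop, mem_iInf_of_directed hdir, mem_principal, ofPred_subset]

lemma exists_monotone_seq_dominating [IsPreorder ι r] [IsDirected ι r] (a : ℕ → ι) :
    ∃ γ : ℕ → ι, (∀ m n, m ≤ n → r (γ m) (γ n)) ∧ ∀ n, r (a n) (γ n) := by
  choose! up hup using fun i j : ι => directed_of r i j
  let γ : ℕ → ι := fun n => Nat.rec (a 0) (fun n g => up g (a (n + 1))) n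
  have hstep : ∀ n, r (γ n) (γ (n + 1)) := fun n => (hup _ _).1
  refine ⟨γ, fun _ _ h => Nat.rel_of_forall_rel_succ_of_le r hstep h, ?_⟩
  rintro (_ | n)
  · exact refl_of r _
  · exact (hup _ _).2

lemma exists_monotone_seq_tendsto_comp [IsPreorder ι r] [IsDirected ι r] [Nonempty ι] {α : Type*}
    {L : Filter α} [L.IsCountablyGenerated] {g : ι → α} (hg : Tendsto g (netAtTop r) L) :
    ∃ γ : ℕ → ι, (∀ m n, m ≤ n → r (γ m) (γ n)) ∧ Tendsto (g ∘ γ) atTop L := by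
  obtain ⟨t, ht⟩ := L.exists_antitone_basis
  choose a ha using fun n => mem_netAtTop_iff.1 (hg (ht.mem n))
  obtain ⟨γ, hγ, haγ⟩ := exists_monotone_seq_dominating (r := r) a
  refine ⟨γ, hγ, ht.1.tendsto_right_iff.2 fun n _ => ?_⟩
  filter_upwards [eventually_ge_atTop n] with m hm
  exact ha n _ (_root_.trans (haγ n) (hγ n m hm))

end DirectedRelation

lemma isGLB_range_of_tendsto_strictMono {X β : Type*} [PartialOrder X] [Preorder β]
    [TopologicalSpace β] [ClosedIciTopology β] {f : X → β} (hf : StrictMono f) {y : ℕ → X}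
    {l : X} (hinf : ∃ m, IsGLB (range y) m) (hl : l ∈ lowerBounds (range y))
    (hfy : Tendsto (f ∘ y) atTop (𝓝 (f l))) : IsGLB (range y) l := by
  obtain ⟨m, hm⟩ := hinf
  have hfm : f m ≤ f l := ge_of_tendsto' hfy fun n => hf.monotone (hm.1 ⟨n, rfl⟩)
  rwa [(hm.2 hl).eq_of_not_lt fun hlt => (hf hlt).not_ge hfm]

lemma exists_monotone_seq_isGLB_comp {ι X β : Type*} {r : ι → ι → Prop} [IsPreorder ι r]
    [IsDirected ι r] [Nonempty ι] [PartialOrder X] [Preorder β] [TopologicalSpace β]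
    [ClosedIciTopology β] [FirstCountableTopology β]
    (hσinf : ∀ y : ℕ → X, Antitone y → (∃ b, ∀ n, b ≤ y n) → ∃ m, IsGLB (range y) m)
    {f : X → β} (hf : StrictMono f) {x : ι → X} {l : X} (hx : ∀ i j, r i j → x j ≤ x i)
    (hl : IsGLB (range x) l) (hfx : Tendsto (f ∘ x) (netAtTop r) (𝓝 (f l))) :
    ∃ γ : ℕ → ι, (∀ m n, m ≤ n → r (γ m) (γ n)) ∧ IsGLB (range (x ∘ γ)) l := by
  obtain ⟨γ, hγ, hfxγ⟩ := exists_monotone_seq_tendsto_comp hfx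
  have hbound : ∀ n, l ≤ x (γ n) := fun n => hl.1 ⟨γ n, rfl⟩
  refine ⟨γ, hγ, isGLB_range_of_tendsto_strictMono hf ?_ ?_ hfxγ⟩
  · exact hσinf _ (fun m n h => hx _ _ (hγ m n h)) ⟨l, hbound⟩
  · rintro _ ⟨n, rfl⟩
    exact hbound n

lemma IsGLB.range_sub_const {ι X : Type*} [AddCommGroup X] [PartialOrder X]
    [IsOrderedAddMonoid X] {x : ι → X} {l : X} (h : IsGLB (range x) l) (c : X) :
    IsGLB (range fun i => x i - c) (l - c) := by
  simpa only [OrderIso.addRight_apply, ← sub_eq_add_neg, ← range_comp'] using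
    (OrderIso.addRight (-c)).isGLB_image'.2 h

theorem stmt4_general {X : Type u} [AddCommGroup X] [PartialOrder X] [IsOrderedAddMonoid X] [Module ℝ X]
    (hσinf : ∀ x : ℕ → X, Antitone x → (∃ b, ∀ n, b ≤ x n) → ∃ l, IsGLB (Set.range x) l)
    (f : X →ₗ[ℝ] ℝ)
    (hfaithful : ∀ x : X, 0 ≤ x → x ≠ 0 → 0 < f x)
    (hnormal : ∀ (ι : Type u) (r : ι → ι → Prop), IsPreorder ι r → IsDirected ι r → Nonempty ι →
      ∀ x : ι → X, (∀ i j, r i j → x j ≤ x i) → IsGLB (Set.range x) 0 →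
        Filter.Tendsto (fun γ => f (x γ)) (netAtTop r) (nhds 0)) :
    MonotoneOrderSeparable X := by
  intro ι r _ _ _ x l
  have hf : StrictMono f := (strictMono_iff_map_pos f).2 fun a ha => hfaithful a ha.le ha.ne'
  have hdecreasing : ∀ (y : ι → X) (a : X), (∀ i j, r i j → y j ≤ y i) → IsGLB (range y) a →
      ∃ γ : ℕ → ι, (∀ m n, m ≤ n → r (γ m) (γ n)) ∧ IsGLB (range (y ∘ γ)) a := by
    intro y a hy ha
    refine exists_monotone_seq_isGLB_comp hσinf hf hy ha ?_
    have := hnormal ι r ‹_› ‹_› ‹_› (fun i => y i - a) (fun i j h => sub_le_sub_right (hy i j h) a)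
      (sub_self a ▸ ha.range_sub_const a)
    simpa only [map_sub, tendsto_sub_nhds_zero_iff, Function.comp_def] using this
  refine ⟨fun hx hl => ?_, hdecreasing x l⟩
  obtain ⟨γ, hγ, hglb⟩ := hdecreasing (-x) (-l) (fun i j h => neg_le_neg (hx i j h))
    (by rw [← neg_range']; exact hl.neg)
  exact ⟨γ, hγ, isGLB_neg'.1 (by rw [neg_range']; exact hglb)⟩

/-- A conditionally monotone σ-complete ordered vector space admitting a faithful normal positive
linear functional is monotone order separable. -/
theorem stmt4 {X : Type u} [AddCommGroup X] [PartialOrder X] [IsOrderedAddMonoid X] [Module ℝ X] [PosSMulStrictMono ℝ X] [PosSMulReflectLT ℝ X]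
    (hσsup : ∀ x : ℕ → X, Monotone x → (∃ b, ∀ n, x n ≤ b) → ∃ l, IsLUB (Set.range x) l)
    (hσinf : ∀ x : ℕ → X, Antitone x → (∃ b, ∀ n, b ≤ x n) → ∃ l, IsGLB (Set.range x) l)
    (f : X →ₗ[ℝ] ℝ)
    (hpos : ∀ x : X, 0 ≤ x → 0 ≤ f x)
    (hfaithful : ∀ x : X, 0 ≤ x → x ≠ 0 → 0 < f x)
    (hnormal : ∀ (ι : Type u) (r : ι → ι → Prop), IsPreorder ι r → IsDirected ι r → Nonempty ι →
      ∀ x : ι → X, (∀ i j, r i j → x j ≤ x i) → IsGLB (Set.range x) 0 →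
        Filter.Tendsto (fun γ => f (x γ)) (netAtTop r) (nhds 0)) :
    MonotoneOrderSeparable X :=
  stmt4_general hσinf f hfaithful hnormal
end

section
/- Let X be a Riesz space (vector lattice) admitting a faithful positive linear functional f. Then X is monotone order separable: for every net (x_γ)_{γ∈Γ} in X with x_γ ↓ 0 there exists an increasing sequence (γ_n) in Γ such that inf_n x_{γ_n} = 0. -/
universe u

/-- A Riesz space admitting a faithful positive linear functional is monotone order separable:
every net decreasing to  admits an increasing sequence of indices along which the infimum is
still . -/
theorem stmt5 {X : Type u} [Lattice X] [AddCommGroup X]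
    [CovariantClass X X (· + ·) (· ≤ ·)] [Module ℝ X]
    (hsmul : ∀ (c : ℝ) (x : X), 0 ≤ c → 0 ≤ x → 0 ≤ c • x)
    (f : X →ₗ[ℝ] ℝ)
    (hpos : ∀ x : X, 0 ≤ x → 0 ≤ f x)
    (hfaithful : ∀ x : X, 0 < x → 0 < f x)
    (ι : Type u) (r : ι → ι → Prop)
    (hpre : IsPreorder ι r) (hdir : IsDirected ι r) (hne : Nonempty ι)
    (x : ι → X) (hanti : ∀ i j, r i j → x j ≤ x i) (hinf : IsGLB (Set.range x) 0) :
    ∃ γ : ℕ → ι, (∀ m n, m ≤ n → r (γ m) (γ n)) ∧ IsGLB (Set.range (x ∘ γ)) 0 := by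
  have hmono : ∀ a b : X, a ≤ b → f a ≤ f b := by
    intro a b h
    have := hpos (b - a) (by simpa using h)
    have hsub : f (b - a) = f b - f a := by simp [map_sub]
    linarith [hsub ▸ this]
  -- every x i is nonnegative
  have hx0 : ∀ i, (0 : X) ≤ x i := fun i => hinf.1 ⟨i, rfl⟩
  set S : Set ℝ := Set.range (fun i => f (x i)) with hS
  have hSne : S.Nonempty := ⟨f (x (Classical.arbitrary ι)), ⟨_, rfl⟩⟩
  have hSbdd : BddBelow S := ⟨0, by rintro s ⟨i, rfl⟩; exact hpos _ (hx0 i)⟩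
  set α : ℝ := sInf S with hα
  have hαle : ∀ i, α ≤ f (x i) := fun i => csInf_le hSbdd ⟨i, rfl⟩
  -- for each n and each i there is j ≥ i with f (x j) < α + 1/(n+1)
  have hstep : ∀ (n : ℕ) (i : ι), ∃ j, r i j ∧ f (x j) < α + 1 / (n + 1) := by
    intro n i
    have hε : (0 : ℝ) < 1 / (n + 1) := by positivity
    obtain ⟨s, ⟨a, rfl⟩, hs⟩ := Real.lt_sInf_add_pos hSne hε
    obtain ⟨j, hij, haj⟩ := hdir.directed i a
    exact ⟨j, hij, lt_of_le_of_lt (hmono _ _ (hanti a j haj)) hs⟩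
  choose g hg1 hg2 using hstep
  let γ : ℕ → ι := fun n => Nat.rec (g 0 (Classical.arbitrary ι)) (fun n p => g (n + 1) p) n
  have hγstep : ∀ n, r (γ n) (γ (n + 1)) := fun n => hg1 (n + 1) (γ n)
  have hγmono : ∀ m n, m ≤ n → r (γ m) (γ n) := by
    intro m n h
    induction n with
    | zero => obtain rfl := Nat.le_zero.mp h; exact hpre.refl _
    | succ n ih =>
      rcases Nat.le_succ_iff.mp h with h' | rfl
      · exact hpre.trans _ _ _ (ih h') (hγstep n)
      · exact hpre.refl _
  have hγlt : ∀ n, f (x (γ n)) < α + 1 / (n + 1) := by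
    intro n
    cases n with
    | zero => exact hg2 0 (Classical.arbitrary ι)
    | succ n => exact hg2 (n + 1) (γ n)
  refine ⟨γ, hγmono, ⟨?_, ?_⟩⟩
  · rintro s ⟨n, rfl⟩; exact hx0 _
  · intro b hb
    set c : X := b ⊔ 0 with hc
    have hcle : ∀ n, c ≤ x (γ n) := fun n =>
      sup_le (hb ⟨n, rfl⟩) (hx0 _)
    -- show c ≤ x i for every i
    have hkey : ∀ i, c ≤ x i := by
      intro i
      set p : X := (c - x i) ⊔ 0 with hp
      have hp0 : (0 : X) ≤ p := le_sup_right
      have hfp : ∀ n : ℕ, f p ≤ 1 / (n + 1) := by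
        intro n
        obtain ⟨j, hij, hnj⟩ := hdir.directed i (γ n)
        have h1 : p ≤ x (γ n) - x j := by
          refine sup_le ?_ ?_
          · exact sub_le_sub (hcle n) (hanti i j hij)
          · simpa using hanti (γ n) j hnj
        have h2 : f (x (γ n) - x j) = f (x (γ n)) - f (x j) := by simp [map_sub]
        have := hmono _ _ h1
        have := hαle j
        have := hγlt n
        linarith [h2 ▸ hmono _ _ h1]
      have hfp0 : f p ≤ 0 := by
        by_contra h
        push_neg at h
        obtain ⟨n, hn⟩ := exists_nat_one_div_lt h
        exact absurd (hfp n) (not_le.mpr (by exact_mod_cast hn))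
      have hfpz : f p = 0 := le_antisymm hfp0 (hpos p hp0)
      have hpz : p = 0 := by
        by_contra h
        have : 0 < p := lt_of_le_of_ne hp0 (Ne.symm h)
        exact absurd hfpz (ne_of_gt (hfaithful p this))
      have : c - x i ≤ 0 := by
        have := sup_eq_right.mp (by rw [← hp]; exact hpz)
        exact this
      exact sub_nonpos.mp this
    have : c ≤ 0 := hinf.2 (by rintro s ⟨i, rfl⟩; exact hkey i)
    exact le_trans le_sup_left this
end

section
/- Let H be a Hilbert space, x a self-adjoint bounded operator with 0 ≤ x ≤ 1, and {p_λ : λ ∈ Λ} a family of orthogonal projections on H such that p_λ ≤ x for every λ. Then p ≤ x, where p is the supremum of the family {p_λ} in the lattice of projections (the projection onto the closed span of the ranges of the p_λ). -/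
/-! For `0 ≤ x ≤ 1`, a projection `e` satisfies `e ≤ x` iff `x * e = e`, i.e. iff `x` fixes the
range of `e`. The fixed space of `x` is closed, so it contains the closed span of the ranges of
the `p λ`, which is the range of `q`. -/

/-- Conjugating by `1 - e` gives `a - e = (1 - e) * a * (1 - e)`, which is nonnegative. -/
theorem IsStarProjection.le_of_nonneg_of_mul_eq {R : Type*} [Ring R] [StarRing R]
    [PartialOrder R] [StarOrderedRing R] {a e : R} (he : IsStarProjection e) (ha : 0 ≤ a)
    (hae : a * e = e) : e ≤ a := by
  have hea : e * a = e := by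
    simpa [ha.isSelfAdjoint.star_eq, he.isSelfAdjoint.star_eq] using congr(star $hae)
  have hconj : (1 - e) * a * (1 - e) = a - e := by
    simp only [sub_mul, mul_sub, one_mul, mul_one, hae, hea, he.isIdempotentElem.eq]
    abel
  rw [← sub_nonneg, ← hconj]
  simpa [he.one_sub.isSelfAdjoint.star_eq] using star_left_conjugate_nonneg ha (1 - e)

/-- Apply `IsStarProjection.mul_right_and_mul_left_of_nonneg_of_le` to `1 - a ≤ 1 - e`. -/
theorem IsStarProjection.mul_eq_of_le_of_le_one {A : Type*} [CStarAlgebra A] [PartialOrder A]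
    [StarOrderedRing A] {a e : A} (he : IsStarProjection e) (hea : e ≤ a) (ha : a ≤ 1) :
    a * e = e := by
  have h := (he.one_sub.mul_right_and_mul_left_of_nonneg_of_le (sub_nonneg.mpr ha)
    (sub_le_sub_left hea 1)).1
  rw [mul_sub, mul_one, sub_eq_self, sub_mul, one_mul, sub_eq_zero] at h
  exact h.symm

theorem IsStarProjection.le_iff_mul_eq {A : Type*} [CStarAlgebra A] [PartialOrder A]
    [StarOrderedRing A] {a e : A} (he : IsStarProjection e) (ha₀ : 0 ≤ a) (ha₁ : a ≤ 1) :
    e ≤ a ↔ a * e = e :=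
  ⟨fun hea ↦ he.mul_eq_of_le_of_le_one hea ha₁, he.le_of_nonneg_of_mul_eq ha₀⟩

theorem ContinuousLinearMap.mul_eq_of_range_le_closure_iSup {R M ι : Type*} [Ring R]
    [TopologicalSpace M] [T1Space M] [AddCommGroup M] [IsTopologicalAddGroup M] [Module R M]
    [ContinuousConstSMul R M] {T q : M →L[R] M} {p : ι → M →L[R] M} (hp : ∀ i, T * p i = p i)
    (hq : LinearMap.range (q : M →ₗ[R] M) ≤
      (⨆ i, LinearMap.range (p i : M →ₗ[R] M)).topologicalClosure) :
    T * q = q := by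
  have hfix : (⨆ i, LinearMap.range (p i : M →ₗ[R] M)).topologicalClosure ≤
      LinearMap.ker ((T - 1 : M →L[R] M) : M →ₗ[R] M) := by
    refine Submodule.topologicalClosure_minimal _ (iSup_le fun i ↦ ?_) (T - 1).isClosed_ker
    rintro _ ⟨w, rfl⟩
    simpa [sub_eq_zero] using congr($(hp i) w)
  ext v
  simpa [sub_eq_zero] using hfix (hq ⟨v, rfl⟩)

theorem stmt7_general {H : Type*} [NormedAddCommGroup H] [InnerProductSpace ℂ H] [CompleteSpace H]
    {Λ : Type*} (x : H →L[ℂ] H) (hx0 : 0 ≤ x) (hx1 : x ≤ 1)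
    (p : Λ → H →L[ℂ] H)
    (hproj : ∀ l, IsIdempotentElem (p l) ∧ IsSelfAdjoint (p l))
    (hle : ∀ l, p l ≤ x)
    (q : H →L[ℂ] H) (hqidem : IsIdempotentElem q) (hqsa : IsSelfAdjoint q)
    (hqrange : LinearMap.range (q : H →ₗ[ℂ] H) =
      (⨆ l, LinearMap.range ((p l : H →ₗ[ℂ] H))).topologicalClosure) :
    q ≤ x := by
  have hxp (l : Λ) : x * p l = p l :=
    ((IsStarProjection.le_iff_mul_eq ⟨(hproj l).1, (hproj l).2⟩ hx0 hx1).mp (hle l))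
  exact (IsStarProjection.le_iff_mul_eq ⟨hqidem, hqsa⟩ hx0 hx1).mpr
    (ContinuousLinearMap.mul_eq_of_range_le_closure_iSup hxp hqrange.le)

/-- If `0 ≤ x ≤ 1` is a self-adjoint operator on a Hilbert space dominating each member of a
family of orthogonal projections, then `x` dominates the supremum of the family, i.e. the
projection onto the closure of the span of the ranges. -/
theorem stmt7 {H : Type*} [NormedAddCommGroup H] [InnerProductSpace ℂ H] [CompleteSpace H]
    {Λ : Type*} (x : H →L[ℂ] H) (hxsa : IsSelfAdjoint x) (hx0 : 0 ≤ x) (hx1 : x ≤ 1)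
    (p : Λ → H →L[ℂ] H)
    (hproj : ∀ l, IsIdempotentElem (p l) ∧ IsSelfAdjoint (p l))
    (hle : ∀ l, p l ≤ x)
    (q : H →L[ℂ] H) (hqidem : IsIdempotentElem q) (hqsa : IsSelfAdjoint q)
    (hqrange : LinearMap.range (q : H →ₗ[ℂ] H) =
      (⨆ l, LinearMap.range ((p l : H →ₗ[ℂ] H))).topologicalClosure) :
    q ≤ x :=
  stmt7_general x hx0 hx1 p hproj hle q hqidem hqsa hqrange
end

section
/- Let X be a real vector space, {ρ_λ : λ ∈ Λ} a pointwise bounded family of seminorms inducing a Hausdorff topology τ', and τ the topology of the norm ‖x‖ := sup_λ ρ_λ(x). Assume the unit ball X¹ of (X,‖·‖) is τ'-compact. Then a subset C of X is closed in the mixed topology γ[τ,τ'] if and only if C ∩ rX¹ is γ[τ,τ']-closed for every r > 0. -/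
/-!
We work with a seminorm `p` (here `⨆ λ, ρ λ`) that is lower semicontinuous for `τ'` and whose
closed unit ball is `τ'`-compact; `τ` is any topology whose `0`-neighbourhoods are generated by
the closed `p`-balls.

Every `τ'`-open set is `γ`-open: a `τ'`-neighbourhood `W₀` of `0` contains all finite sums
`∑_{i<n} W_{i+1}` for neighbourhoods with `W_{n+1} + W_{n+1} ⊆ W_n`. So the balls are `γ`-closed,
which gives the forward direction. Conversely, a `γ`-closed subset `D` of a ball `rX¹` is
`τ'`-closed: if `x ∈ rX¹ \ D` and `x + mixBall U' U` misses `D`, with `U ⊇ εX¹`, then already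
`x + U'_{k+1}` misses `D` once `(k+1)ε ≥ 2r`, since `D - x ⊆ 2rX¹`. Hence all `C ∩ rX¹` are
`τ'`-closed. For `x ∉ C` we then grow compact sets `A₀ = {x}`,
`A_{n+1} = A_n + (V_n ∩ (n+1)X¹)` inside balls `R_n X¹`, choosing the closed `τ'`-neighbourhood
`V_n` so that `A_n + V_n` misses the `τ'`-closed set `C ∩ R_{n+1}X¹`. Then every `A_n` misses `C`,
and `x + mixBall (V_{·-1}) X¹ ⊆ ⋃ A_n` is a `γ`-neighbourhood of `x` disjoint from `C`.
-/

open Pointwise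

/-- The basic "mixed" neighbourhoods of `0`: `⋃ n, ∑_{i=1}^n (U'_i ∩ i·U)`. -/
def mixBall {X : Type*} [AddCommGroup X] [Module ℝ X] (U' : ℕ → Set X) (U : Set X) : Set X :=
  ⋃ n : ℕ, ∑ i ∈ Finset.range n, (U' (i + 1) ∩ (((i : ℝ) + 1) • U))

/-- The mixed topology `γ[t, t']` of Wiweger: the topology whose neighbourhoods of a point `x`
are generated by the translates `x + mixBall U' U`, where `U'` is a sequence of
`t'`-neighbourhoods of `0` and `U` is a `t`-neighbourhood of `0`. -/
def mixedTopology {X : Type*} [AddCommGroup X] [Module ℝ X]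
    (t t' : TopologicalSpace X) : TopologicalSpace X :=
  TopologicalSpace.generateFrom
    {V | ∀ x ∈ V, ∃ (U' : ℕ → Set X) (U : Set X),
      (∀ n, U' n ∈ @nhds X t' 0) ∧ U ∈ @nhds X t 0 ∧
      ∀ y ∈ mixBall U' U, x + y ∈ V}

open Set Filter Topology

theorem exists_seq_of_forall_exists_step {α β : Type*} {P : ℕ → α → Prop} {Q : β → Prop}
    (f : ℕ → α → β → α) {a₀ : α} (h₀ : P 0 a₀)
    (h : ∀ n a, P n a → ∃ b, Q b ∧ P (n + 1) (f n a b)) :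
    ∃ (a : ℕ → α) (b : ℕ → β), a 0 = a₀ ∧
      ∀ n, Q (b n) ∧ P n (a n) ∧ a (n + 1) = f n (a n) (b n) := by
  let c : (n : ℕ) → {a // P n a} := fun n => Nat.rec (motive := fun n => {a // P n a}) ⟨a₀, h₀⟩
    (fun n c => ⟨f n c.1 (h n c.1 c.2).choose, (h n c.1 c.2).choose_spec.2⟩) n
  exact ⟨fun n => (c n).1, fun n => (h n _ (c n).2).choose, rfl,
    fun n => ⟨(h n _ (c n).2).choose_spec.1, (c n).2, rfl⟩⟩

section ContinuousAdd

variable {G : Type*} [TopologicalSpace G] [AddZeroClass G] [ContinuousAdd G]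

theorem exists_seq_mem_nhds_zero_add_subset {V : Set G} (hV : V ∈ 𝓝 0) :
    ∃ W : ℕ → Set G, W 0 = V ∧ (∀ n, W n ∈ 𝓝 0) ∧ ∀ n, W (n + 1) + W (n + 1) ⊆ W n := by
  choose! half hhalf_mem hhalf_add using fun s (hs : s ∈ 𝓝 (0 : G)) => exists_nhds_zero_half hs
  have hW : ∀ n, half^[n] V ∈ 𝓝 0 := by
    intro n
    induction n with
    | zero => exact hV
    | succ n ih => rw [Function.iterate_succ_apply']; exact hhalf_mem _ ih
  refine ⟨fun n => half^[n] V, rfl, hW, fun n => ?_⟩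
  dsimp only
  rw [Function.iterate_succ_apply']
  exact add_subset_iff.mpr (hhalf_add _ (hW n))

theorem exists_isClosed_nhds_zero_disjoint_add [RegularSpace G] {K F : Set G} (hK : IsCompact K)
    (hF : IsClosed F) (hKF : Disjoint K F) : ∃ V ∈ 𝓝 (0 : G), IsClosed V ∧ Disjoint (K + V) F := by
  obtain ⟨V, hV, hKV⟩ :=
    compact_open_separated_add_right hK hF.isOpen_compl (subset_compl_iff_disjoint_right.mpr hKF)
  obtain ⟨W, hW, hW_closed, hWV⟩ := exists_mem_nhds_isClosed_subset hV
  exact ⟨W, hW, hW_closed,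
    subset_compl_iff_disjoint_right.mp ((add_subset_add_left hWV).trans hKV)⟩

end ContinuousAdd

theorem finsetSum_range_succ_subset_of_add_subset {G : Type*} [AddCommMonoid G] {W : ℕ → Set G}
    (h0 : ∀ n, (0 : G) ∈ W n) (hW : ∀ n, W (n + 1) + W (n + 1) ⊆ W n) (n : ℕ) :
    ∑ i ∈ Finset.range n, W (i + 1) ⊆ W 0 := by
  -- the last summand leaves room for one more copy of `W n`
  have key : ∀ n, ∑ i ∈ Finset.range n, W (i + 1) + W n ⊆ W 0 := by
    intro n
    induction n with
    | zero => simp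
    | succ n ih =>
      rw [Finset.sum_range_succ, add_assoc]
      exact (add_subset_add_left (hW n)).trans ih
  exact fun y hy => key n (by simpa using add_mem_add hy (h0 n))

section MixedTopology

variable {X : Type*} [AddCommGroup X] [Module ℝ X]

theorem mixBall_mono {U' V' : ℕ → Set X} {U V : Set X} (h' : ∀ n, U' n ⊆ V' n) (h : U ⊆ V) :
    mixBall U' U ⊆ mixBall V' V :=
  iUnion_mono fun _ => finsetSum_subset_finsetSum _ _ _ fun _ _ =>
    inter_subset_inter (h' _) (smul_set_mono h)

theorem isOpen_mixedTopology_iff {t t' : TopologicalSpace X} {V : Set X} :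
    IsOpen[mixedTopology t t'] V ↔ ∀ x ∈ V, ∃ (U' : ℕ → Set X) (U : Set X),
      (∀ n, U' n ∈ @nhds X t' 0) ∧ U ∈ @nhds X t 0 ∧ ∀ y ∈ mixBall U' U, x + y ∈ V := by
  refine ⟨fun hV => ?_, fun h => TopologicalSpace.GenerateOpen.basic V h⟩
  induction hV with
  | basic _ h => exact h
  | univ => exact fun _ _ => ⟨fun _ => univ, univ, fun _ => univ_mem, univ_mem, fun _ _ => trivial⟩
  | inter V₁ V₂ _ _ ih₁ ih₂ =>
    intro x hx
    obtain ⟨U₁', U₁, hU₁', hU₁, hsub₁⟩ := ih₁ x hx.1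
    obtain ⟨U₂', U₂, hU₂', hU₂, hsub₂⟩ := ih₂ x hx.2
    refine ⟨fun n => U₁' n ∩ U₂' n, U₁ ∩ U₂, fun n => inter_mem (hU₁' n) (hU₂' n),
      inter_mem hU₁ hU₂, fun y hy => ⟨hsub₁ y ?_, hsub₂ y ?_⟩⟩
    · exact mixBall_mono (fun _ => inter_subset_left) inter_subset_left hy
    · exact mixBall_mono (fun _ => inter_subset_right) inter_subset_right hy
  | sUnion T _ ih =>
    rintro x ⟨W, hW, hxW⟩
    obtain ⟨U', U, hU', hU, hsub⟩ := ih W hW x hxW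
    exact ⟨U', U, hU', hU, fun y hy => ⟨W, hW, hsub y hy⟩⟩

theorem mixedTopology_le (t : TopologicalSpace X) [t' : TopologicalSpace X]
    [IsTopologicalAddGroup X] : mixedTopology t t' ≤ t' := by
  intro V hV
  rw [isOpen_mixedTopology_iff]
  intro x hx
  have hxV : (x + ·) ⁻¹' V ∈ 𝓝 (0 : X) := by
    rw [← mem_map, map_add_left_nhds_zero]
    exact hV.mem_nhds hx
  obtain ⟨W, hW0, hW, hWW⟩ := exists_seq_mem_nhds_zero_add_subset hxV
  refine ⟨W, univ, hW, univ_mem, fun y hy => ?_⟩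
  obtain ⟨n, hn⟩ := mem_iUnion.mp hy
  have hy0 : y ∈ W 0 := finsetSum_range_succ_subset_of_add_subset (fun n => mem_of_mem_nhds (hW n))
    hWW n (finsetSum_subset_finsetSum _ _ _ (fun _ _ => inter_subset_left) hn)
  rw [hW0] at hy0
  exact hy0

end MixedTopology

theorem Seminorm.hasBasis_nhds_zero_closedBall {X : Type*} [AddCommGroup X] [Module ℝ X]
    (p : Seminorm ℝ X) :
    (@nhds X (SeminormFamily.moduleFilterBasis fun _ : Unit => p).topology 0).HasBasis
      (fun ε : ℝ => 0 < ε) (p.closedBall 0) := by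
  let := (SeminormFamily.moduleFilterBasis fun _ : Unit => p).topology
  have hp : WithSeminorms fun _ : Unit => p := ⟨rfl⟩
  refine ⟨fun U => ⟨fun hU => ?_, fun ⟨ε, hε, hεU⟩ => ?_⟩⟩
  · obtain ⟨s, r, hr, hsU⟩ := (hp.mem_nhds_iff 0 U).mp hU
    refine ⟨r / 2, half_pos hr, fun y hy => hsU ?_⟩
    refine Seminorm.ball_antitone (Finset.sup_le fun _ _ => le_rfl) ?_
    exact p.mem_ball_zero.mpr (by linarith [p.mem_closedBall_zero.mp hy])
  · exact mem_of_superset (Seminorm.ball_mem_nhds (hp.continuous_seminorm ()) hε)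
      ((p.ball_subset_closedBall 0 ε).trans hεU)

section SeminormBall

variable {X : Type*} [AddCommGroup X] [Module ℝ X] {p : Seminorm ℝ X}

theorem Seminorm.isClosed_closedBall_zero [TopologicalSpace X] (hp : LowerSemicontinuous p)
    (r : ℝ) : IsClosed (p.closedBall 0 r) := by
  rw [Seminorm.closedBall_zero_eq]
  exact hp.isClosed_preimage r

theorem inter_closedBall_subset_mixBall {U' : ℕ → Set X} {U : Set X} {ε r : ℝ} {k : ℕ}
    (hε : 0 ≤ ε) (hU' : ∀ n, (0 : X) ∈ U' n) (hU : p.closedBall 0 ε ⊆ U)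
    (hk : r ≤ (k + 1) * ε) : U' (k + 1) ∩ p.closedBall 0 r ⊆ mixBall U' U := by
  rintro y ⟨hyU', hyr⟩
  have hk_norm : ‖(k : ℝ) + 1‖ = k + 1 := Real.norm_of_nonneg (by positivity)
  have hy : y ∈ ((k : ℝ) + 1) • U := by
    refine smul_set_mono hU ?_
    rw [Seminorm.smul_closedBall_zero (by rw [hk_norm]; positivity), hk_norm]
    exact p.closedBall_mono hk hyr
  have h0U : (0 : X) ∈ U := hU (p.mem_closedBall_zero.mpr (by simpa using hε))
  have h0 : (0 : X) ∈ ∑ i ∈ Finset.range k, (U' (i + 1) ∩ ((i : ℝ) + 1) • U) := by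
    simpa using Set.finsetSum_mem_finsetSum (Finset.range k)
      (fun i => U' (i + 1) ∩ ((i : ℝ) + 1) • U) (fun _ => 0) fun i _ =>
      mem_inter (hU' (i + 1)) (zero_mem_smul_set h0U)
  refine mem_iUnion.mpr ⟨k + 1, ?_⟩
  rw [Finset.sum_range_succ]
  simpa using Set.add_mem_add h0 (mem_inter hyU' hy)

variable {t : TopologicalSpace X} [TopologicalSpace X] [IsTopologicalAddGroup X]

theorem isClosed_of_isClosed_mixedTopology_of_subset_closedBall (hp : LowerSemicontinuous p)
    (ht : (@nhds X t 0).HasBasis (fun ε : ℝ => 0 < ε) (p.closedBall 0)) {D : Set X} {r : ℝ}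
    (hDr : D ⊆ p.closedBall 0 r) (hD : IsClosed[mixedTopology t ‹_›] D) : IsClosed D := by
  rw [← isOpen_compl_iff, isOpen_iff_mem_nhds]
  intro x hx
  by_cases hxr : x ∈ p.closedBall 0 r
  · obtain ⟨U', U, hU', hU, hsub⟩ := isOpen_mixedTopology_iff.mp hD.isOpen_compl x hx
    obtain ⟨ε, hε, hεU⟩ := ht.mem_iff.mp hU
    obtain ⟨k, hk⟩ : ∃ k : ℕ, r + r ≤ (k + 1) * ε := by
      refine ⟨⌈(r + r) / ε⌉₊, ?_⟩
      rw [← div_le_iff₀ hε]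
      exact (Nat.le_ceil _).trans (by linarith)
    rw [← map_add_left_nhds_zero, mem_map]
    refine mem_of_superset (hU' (k + 1)) fun y hy hyD => hsub y ?_ hyD
    refine inter_closedBall_subset_mixBall hε.le (fun n => mem_of_mem_nhds (hU' n)) hεU hk ⟨hy, ?_⟩
    have hyx : y = (x + y) - x := (add_sub_cancel_left x y).symm
    rw [Seminorm.mem_closedBall_zero, hyx]
    exact (map_sub_le_add p _ _).trans
      (add_le_add (p.mem_closedBall_zero.mp (hDr hyD)) (p.mem_closedBall_zero.mp hxr))
  · exact mem_of_superset ((Seminorm.isClosed_closedBall_zero hp r).isOpen_compl.mem_nhds hxr)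
      (compl_subset_compl.mpr hDr)

variable [ContinuousConstSMul ℝ X]

theorem exists_nhds_zero_add_inter_smul_closedBall (hcpt : IsCompact (p.closedBall 0 1))
    {A C : Set X} {s c r : ℝ} (hc : 0 < c) (hsr : s + c ≤ r) (hA : IsCompact A)
    (hAC : Disjoint A C) (hAs : A ⊆ p.closedBall 0 s) (hC : IsClosed (C ∩ p.closedBall 0 r)) :
    ∃ V ∈ 𝓝 (0 : X), IsCompact (A + (V ∩ c • p.closedBall 0 1)) ∧
      Disjoint (A + (V ∩ c • p.closedBall 0 1)) C ∧
      A + (V ∩ c • p.closedBall 0 1) ⊆ p.closedBall 0 r := by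
  obtain ⟨V, hV, hV_closed, hAV⟩ :=
    exists_isClosed_nhds_zero_disjoint_add hA hC (hAC.mono_right inter_subset_left)
  have hc_ball : c • p.closedBall 0 1 = p.closedBall 0 c := by
    rw [Seminorm.smul_closedBall_zero (by simpa using hc.ne'), Real.norm_of_nonneg hc.le, mul_one]
  have hsub : A + (V ∩ c • p.closedBall 0 1) ⊆ p.closedBall 0 r := by
    refine (add_subset_add hAs (inter_subset_right.trans hc_ball.subset)).trans ?_
    refine (p.closedBall_add_closedBall_subset s c 0 0).trans ?_
    rw [add_zero]
    exact p.closedBall_mono hsr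
  refine ⟨V, hV, hA.add ((hcpt.smul c).inter_left hV_closed), ?_, hsub⟩
  exact disjoint_left.mpr fun z hz hzC =>
    disjoint_left.mp hAV (add_subset_add_left inter_subset_left hz) ⟨hzC, hsub hz⟩

theorem isOpen_mixedTopology_compl_of_isClosed_inter_closedBall
    (ht : (@nhds X t 0).HasBasis (fun ε : ℝ => 0 < ε) (p.closedBall 0))
    (hcpt : IsCompact (p.closedBall 0 1)) {C : Set X}
    (hC : ∀ r > 0, IsClosed (C ∩ p.closedBall 0 r)) : IsOpen[mixedTopology t ‹_›] Cᶜ := by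
  rw [isOpen_mixedTopology_iff]
  intro x hx
  let R : ℕ → ℝ := fun n => p x + n ^ 2
  let grow : ℕ → Set X → Set X → Set X := fun n A V =>
    A + (V ∩ ((n : ℝ) + 1) • p.closedBall 0 1)
  obtain ⟨A, V, hA0, hAV⟩ := exists_seq_of_forall_exists_step
    (P := fun n A => IsCompact A ∧ Disjoint A C ∧ A ⊆ p.closedBall 0 (R n))
    (Q := fun V => V ∈ 𝓝 (0 : X)) grow
    ⟨isCompact_singleton, disjoint_singleton_left.mpr hx, by simp [R]⟩
    fun n A ⟨hA, hAC, hAR⟩ => exists_nhds_zero_add_inter_smul_closedBall hcpt (by positivity)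
      (by simp only [R]; push_cast; nlinarith) hA hAC hAR
      (hC _ (by simp only [R]; positivity))
  refine ⟨fun m => V (m - 1), p.closedBall 0 1, fun m => (hAV _).1, ht.mem_of_mem one_pos,
    fun y hy => ?_⟩
  obtain ⟨n, hn⟩ := mem_iUnion.mp hy
  have hmem : ∀ n, ∀ y ∈ ∑ i ∈ Finset.range n,
      (V (i + 1 - 1) ∩ ((i : ℝ) + 1) • p.closedBall 0 1), x + y ∈ A n := by
    intro n
    induction n with
    | zero => simp [hA0]
    | succ n ih =>
      intro w hw
      rw [Finset.sum_range_succ] at hw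
      obtain ⟨y, hy, z, hz, rfl⟩ := hw
      rw [(hAV n).2.2, ← add_assoc]
      exact Set.add_mem_add (ih y hy) (by simpa using hz)
  exact disjoint_left.mp (hAV n).2.1.2.1 (hmem n y hn)

end SeminormBall

theorem stmt11_general {X : Type*} [AddCommGroup X] [Module ℝ X]
    {Λ : Type*} (ρ : SeminormFamily ℝ X Λ)
    (hbdd : ∀ x : X, BddAbove (Set.range fun l => ρ l x))
    (hcpt : @IsCompact X ρ.moduleFilterBasis.topology {x : X | ∀ l, ρ l x ≤ 1}) :
    ∀ C : Set X,
      @IsClosed X (mixedTopology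
          (SeminormFamily.moduleFilterBasis (fun _ : Unit => (⨆ l, ρ l : Seminorm ℝ X))).topology
          ρ.moduleFilterBasis.topology) C ↔
        ∀ r : ℝ, 0 < r →
          @IsClosed X (mixedTopology
              (SeminormFamily.moduleFilterBasis (fun _ : Unit => (⨆ l, ρ l : Seminorm ℝ X))).topology
              ρ.moduleFilterBasis.topology)
            (C ∩ {x : X | ∀ l, ρ l x ≤ r}) := by
  let := ρ.moduleFilterBasis.topology
  have hρ : WithSeminorms ρ := ⟨rfl⟩
  have := hρ.topologicalAddGroup
  have := hρ.continuousSMul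
  have hbdd' : BddAbove (range ρ) := Seminorm.bddAbove_range_iff.mpr hbdd
  have hball : ∀ r > 0, {x : X | ∀ l, ρ l x ≤ r} = (⨆ l, ρ l).closedBall 0 r := fun r hr => by
    ext x
    simp [Seminorm.closedBall_iSup hbdd' 0 hr]
  have hp : LowerSemicontinuous ⇑(⨆ l, ρ l : Seminorm ℝ X) := by
    rw [show ⇑(⨆ l, ρ l : Seminorm ℝ X) = fun x => ⨆ l, ρ l x from
      funext fun _ => Seminorm.iSup_apply hbdd']
    exact lowerSemicontinuous_ciSup hbdd fun l => (hρ.continuous_seminorm l).lowerSemicontinuous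
  have ht := Seminorm.hasBasis_nhds_zero_closedBall (⨆ l, ρ l)
  intro C
  constructor
  · intro hC r hr
    rw [hball r hr]
    exact @IsClosed.inter X _ _ (mixedTopology _ _) hC
      ((Seminorm.isClosed_closedBall_zero hp r).mono (mixedTopology_le _))
  · intro hC
    rw [← @isOpen_compl_iff X C (mixedTopology _ _)]
    refine isOpen_mixedTopology_compl_of_isClosed_inter_closedBall ht (hball 1 one_pos ▸ hcpt)
      fun r hr => isClosed_of_isClosed_mixedTopology_of_subset_closedBall hp ht inter_subset_right
        (hball r hr ▸ hC r hr)

/-- Let `ρ` be a pointwise bounded, separating family of seminorms with topology `τ'`, and let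
`τ` be the topology of the supremum norm `‖x‖ = sup_λ ρ_λ x`.  If the unit ball
`{x | ∀ λ, ρ λ x ≤ 1}` is `τ'`-compact, then a set `C` is closed in the mixed topology
`γ[τ,τ']` iff `C ∩ rX¹` is `γ[τ,τ']`-closed for every `r > 0`. -/
theorem stmt11 {X : Type*} [AddCommGroup X] [Module ℝ X]
    {Λ : Type*} [Nonempty Λ] (ρ : SeminormFamily ℝ X Λ)
    (hbdd : ∀ x : X, BddAbove (Set.range fun l => ρ l x))
    (hsep : ∀ x : X, (∀ l, ρ l x = 0) → x = 0)
    (hcpt : @IsCompact X ρ.moduleFilterBasis.topology {x : X | ∀ l, ρ l x ≤ 1}) :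
    ∀ C : Set X,
      @IsClosed X (mixedTopology
          (SeminormFamily.moduleFilterBasis (fun _ : Unit => (⨆ l, ρ l : Seminorm ℝ X))).topology
          ρ.moduleFilterBasis.topology) C ↔
        ∀ r : ℝ, 0 < r →
          @IsClosed X (mixedTopology
              (SeminormFamily.moduleFilterBasis (fun _ : Unit => (⨆ l, ρ l : Seminorm ℝ X))).topology
              ρ.moduleFilterBasis.topology)
            (C ∩ {x : X | ∀ l, ρ l x ≤ r}) :=
  stmt11_general ρ hbdd hcpt
end

section
/- Under the hypotheses: X a real vector space, {ρ_λ : λ ∈ Λ} a pointwise bounded family of seminorms inducing Hausdorff topology τ', ‖x‖ := sup_λ ρ_λ(x) a norm inducing τ, and the unit ball X¹ τ'-compact — if additionally Λ is countable, then (X, γ[τ,τ']) is a sequential space. -/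
open Pointwise

/-!
On norm-bounded sets `γ[τ, τ']` induces `τ'`, which is first countable when `Λ` is countable, so a
`γ`-sequentially closed set `A` meets every ball `r X¹` in a `τ'`-closed set. Conversely, such an
`A` is `γ`-closed: for `x ∉ A` one grows compact sets `K₀ = {x}`, `Kₙ₊₁ = Kₙ + Cₙ ∩ (n + 1) X¹`
avoiding `A`, where the `τ'`-neighbourhoods `Cₙ` exist because `Kₙ` is compact and `A` is
`τ'`-closed on the bounded set containing `Kₙ₊₁`; the `Cₙ` then define a mixed ball around `x`
missing `A`. Compactness of `Kₙ₊₁` comes from the `τ'`-compactness of `X¹`.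
-/

open Topology Filter

section

variable {X : Type*} [AddCommGroup X] [Module ℝ X]

lemma mem_mixBall {U' : ℕ → Set X} {U : Set X} (hU' : ∀ n, (0 : X) ∈ U' n) (hU : (0 : X) ∈ U)
    {i : ℕ} {y : X} (hy : y ∈ U' (i + 1) ∩ ((i : ℝ) + 1) • U) : y ∈ mixBall U' U := by
  refine Set.mem_iUnion.2 ⟨i + 1, ?_⟩
  rw [Finset.sum_range_succ]
  have h0 : (0 : X) ∈ ∑ j ∈ Finset.range i, (U' (j + 1) ∩ ((j : ℝ) + 1) • U) := by
    simpa using Set.finsetSum_mem_finsetSum _ _ (fun _ => (0 : X)) fun j _ =>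
      (⟨hU' (j + 1), 0, hU, smul_zero _⟩ : (0 : X) ∈ U' (j + 1) ∩ ((j : ℝ) + 1) • U)
  simpa using Set.add_mem_add h0 hy

lemma Seminorm.nhds_zero_hasBasis_ball [TopologicalSpace X] {q : Seminorm ℝ X}
    (hq : WithSeminorms fun _ : Unit => q) : (𝓝 (0 : X)).HasBasis (0 < ·) (q.ball 0) :=
  hq.hasBasis_zero_ball.to_hasBasis
    (fun sr hr => ⟨sr.2, hr, Seminorm.ball_antitone (Finset.sup_le fun _ _ => le_rfl)⟩)
    (fun r hr => ⟨({()}, r), hr, by simp⟩)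

lemma Seminorm.isClosed_closedBall_zero_iSup [TopologicalSpace X] {ι : Type*}
    {p : ι → Seminorm ℝ X} (hbdd : ∀ x, BddAbove (Set.range fun i => p i x))
    (hp : ∀ i, Continuous (p i)) (r : ℝ) : IsClosed ((⨆ i, p i).closedBall 0 r) := by
  have hsup : ((⨆ i, p i : Seminorm ℝ X) : X → ℝ) = fun x => ⨆ i, p i x :=
    funext fun _ => Seminorm.iSup_apply (Seminorm.bddAbove_range_iff.2 hbdd)
  have hlsc := lowerSemicontinuous_ciSup hbdd fun i => (hp i).lowerSemicontinuous
  rw [← hsup] at hlsc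
  convert hlsc.isClosed_preimage r using 1
  ext
  simp

lemma tendsto_mixedTopology_of_bounded {ι : Type*} {l : Filter ι} (t t' : TopologicalSpace X)
    (q : Seminorm ℝ X) (ht : ∀ U ∈ @nhds X t 0, ∃ ε > 0, q.ball 0 ε ⊆ U) {f : ι → X} {y : X}
    {R : ℝ} (hR : ∀ᶠ k in l, q (f k - y) ≤ R) (hf : Tendsto (fun k => f k - y) l (@nhds X t' 0)) :
    Tendsto f l (@nhds X (mixedTopology t t') y) := by
  rw [mixedTopology, TopologicalSpace.tendsto_nhds_generateFrom_iff]
  rintro V hV hyV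
  obtain ⟨U', U, hU', hU, hUV⟩ := hV y hyV
  obtain ⟨ε, hε, hεU⟩ := ht U hU
  obtain ⟨i, hi⟩ := exists_nat_gt (R / ε)
  have hc : (0 : ℝ) < (i : ℝ) + 1 := by positivity
  have hRc : R < ((i : ℝ) + 1) * ε :=
    ((div_lt_iff₀ hε).1 hi).trans_le (by gcongr; linarith)
  -- The bound puts `f - y` in `(i + 1) • U`, hence its tail in one summand of the mixed ball.
  filter_upwards [hf (hU' (i + 1)), hR] with k hk hkR
  have hkU : f k - y ∈ ((i : ℝ) + 1) • U := by
    refine Set.smul_set_mono hεU ?_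
    rw [Seminorm.smul_ball_zero hc.ne', Real.norm_of_nonneg hc.le, Seminorm.mem_ball_zero]
    exact hkR.trans_lt hRc
  have hmix := mem_mixBall (fun n => @mem_of_mem_nhds X t' _ _ (hU' n))
    (@mem_of_mem_nhds X t _ _ hU) ⟨hk, hkU⟩
  simpa using hUV _ hmix

-- `t` comes before the instance, so that instance search finds the latter.
variable (t : TopologicalSpace X) [TopologicalSpace X] [IsTopologicalAddGroup X]

lemma exists_mem_nhds_add_inter_closedBall_disjoint {q : Seminorm ℝ X} {A K : Set X} {s : ℝ}
    (hs : IsCompact (q.closedBall 0 s)) (hA : ∀ r, IsClosed (A ∩ q.closedBall 0 r))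
    (hK : IsCompact K) (hKb : ∃ r, K ⊆ q.closedBall 0 r) (hKA : Disjoint K A) :
    ∃ C ∈ 𝓝 (0 : X), IsCompact (K + C ∩ q.closedBall 0 s) ∧
      (∃ r, K + C ∩ q.closedBall 0 s ⊆ q.closedBall 0 r) ∧
      Disjoint (K + C ∩ q.closedBall 0 s) A := by
  obtain ⟨r, hKr⟩ := hKb
  have hsum : ∀ C : Set X, K + C ∩ q.closedBall 0 s ⊆ q.closedBall 0 (r + s) := fun C =>
    (Set.add_subset_add hKr Set.inter_subset_right).trans
      (by simpa using q.closedBall_add_closedBall_subset r s 0 0)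
  have hKopen : K ⊆ (A ∩ q.closedBall 0 (r + s))ᶜ := fun x hx hxA =>
    Set.disjoint_left.1 hKA hx hxA.1
  obtain ⟨V, hV, hKV⟩ := compact_open_separated_add_right hK (hA _).isOpen_compl hKopen
  obtain ⟨C, hC, hCcl, hCV⟩ := exists_mem_nhds_isClosed_subset hV
  refine ⟨C, hC, hK.add (hs.inter_left hCcl), ⟨r + s, hsum C⟩, Set.disjoint_left.2 ?_⟩
  intro z hz hzA
  exact hKV (Set.add_subset_add_left (Set.inter_subset_left.trans hCV) hz) ⟨hzA, hsum C hz⟩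

lemma exists_mixBall_add_notMem [ContinuousConstSMul ℝ X] {q : Seminorm ℝ X}
    (hq : IsCompact (q.closedBall 0 1)) {A : Set X} (hA : ∀ r, IsClosed (A ∩ q.closedBall 0 r))
    {x : X} (hx : x ∉ A) :
    ∃ U' : ℕ → Set X, (∀ n, U' n ∈ 𝓝 (0 : X)) ∧
      ∀ y ∈ mixBall U' (q.closedBall 0 1), x + y ∉ A := by
  have hball (n : ℕ) : ((n : ℝ) + 1) • q.closedBall 0 1 = q.closedBall 0 ((n : ℝ) + 1) := by
    rw [Seminorm.smul_closedBall_zero (norm_pos_iff.2 (by positivity)),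
      Real.norm_of_nonneg (by positivity), mul_one]
  let P : Set X → Prop := fun K =>
    IsCompact K ∧ (∃ r, K ⊆ q.closedBall 0 r) ∧ Disjoint K A
  have step : ∀ (K : Set X) (n : ℕ), P K →
      ∃ C ∈ 𝓝 (0 : X), P (K + C ∩ q.closedBall 0 ((n : ℝ) + 1)) := fun K n hK =>
    exists_mem_nhds_add_inter_closedBall_disjoint (hball n ▸ hq.smul _) hA hK.1 hK.2.1 hK.2.2
  choose! C hC hCP using step
  let K : ℕ → Set X := fun n =>
    Nat.rec {x} (fun n Kn => Kn + C Kn n ∩ q.closedBall 0 ((n : ℝ) + 1)) n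
  have hK (n : ℕ) : P (K n) := by
    induction n with
    | zero => exact ⟨isCompact_singleton, ⟨q x, Set.singleton_subset_iff.2 (by simp)⟩,
        Set.disjoint_singleton_left.2 hx⟩
    | succ n ih => exact hCP _ _ ih
  have hpartial (n : ℕ) : ∀ y ∈ ∑ i ∈ Finset.range n,
      (C (K i) i ∩ ((i : ℝ) + 1) • q.closedBall 0 1), x + y ∈ K n := by
    induction n with
    | zero =>
      intro y hy
      simp only [Finset.range_zero, Finset.sum_empty, Set.mem_zero] at hy
      simp [hy, K]
    | succ n ih =>
      rw [Finset.sum_range_succ]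
      rintro _ ⟨a, ha, b, hb, rfl⟩
      rw [hball] at hb
      rw [← add_assoc]
      exact Set.add_mem_add (ih a ha) hb
  -- `mixBall` only reads `U' (n + 1)`, so the junk value `U' 0 = U' 1` is harmless.
  refine ⟨fun n => C (K (n - 1)) (n - 1), fun n => hC _ _ (hK _), fun y hy => ?_⟩
  obtain ⟨n, hn⟩ := Set.mem_iUnion.1 hy
  exact Set.disjoint_left.1 (hK n).2.2 (hpartial n y hn)

lemma isClosed_mixedTopology_of_isClosed_inter_closedBall [ContinuousConstSMul ℝ X]
    {q : Seminorm ℝ X} (ht : q.closedBall 0 1 ∈ @nhds X t 0)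
    (hq : IsCompact (q.closedBall 0 1)) {A : Set X} (hA : ∀ r, IsClosed (A ∩ q.closedBall 0 r)) :
    @IsClosed X (mixedTopology t ‹_›) A := by
  refine @IsClosed.mk X (mixedTopology t _) A (TopologicalSpace.isOpen_generateFrom_of_mem ?_)
  intro x hx
  obtain ⟨U', hU', hA'⟩ := exists_mixBall_add_notMem hq hA hx
  exact ⟨U', _, hU', ht, hA'⟩

lemma isClosed_inter_closedBall_of_isSeqClosed [SequentialSpace X]
    {q : Seminorm ℝ X} (ht : ∀ U ∈ @nhds X t 0, ∃ ε > 0, q.ball 0 ε ⊆ U)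
    (hq : ∀ r, IsClosed (q.closedBall 0 r)) {A : Set X}
    (hA : @IsSeqClosed X (mixedTopology t ‹_›) A) (r : ℝ) :
    IsClosed (A ∩ q.closedBall 0 r) := by
  refine IsSeqClosed.isClosed fun z w hz hzw => ?_
  have hw : w ∈ q.closedBall 0 r := (hq r).isSeqClosed (fun k => (hz k).2) hzw
  have hbdd (k : ℕ) : q (z k - w) ≤ r + r :=
    (map_sub_le_add q _ _).trans (add_le_add (q.mem_closedBall_zero.1 (hz k).2)
      (q.mem_closedBall_zero.1 hw))
  refine ⟨hA (fun k => (hz k).1) (tendsto_mixedTopology_of_bounded t _ q ht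
    (Eventually.of_forall hbdd) ?_), hw⟩
  simpa using hzw.sub_const w

end

theorem stmt12_general {X : Type*} [AddCommGroup X] [Module ℝ X]
    {Λ : Type*} [Countable Λ] (ρ : SeminormFamily ℝ X Λ)
    (hbdd : ∀ x : X, BddAbove (Set.range fun l => ρ l x))
    (hcpt : @IsCompact X ρ.moduleFilterBasis.topology {x : X | ∀ l, ρ l x ≤ 1}) :
    @SequentialSpace X (mixedTopology
      (SeminormFamily.moduleFilterBasis (fun _ : Unit => (⨆ l, ρ l : Seminorm ℝ X))).topology
      ρ.moduleFilterBasis.topology) := by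
  set q : Seminorm ℝ X := ⨆ l, ρ l
  have hq : (@nhds X (SeminormFamily.moduleFilterBasis fun _ : Unit => q).topology 0).HasBasis
      (0 < ·) (q.ball 0) := @Seminorm.nhds_zero_hasBasis_ball X _ _
        (SeminormFamily.moduleFilterBasis fun _ : Unit => q).topology q
        (WithSeminorms.mk (topology := _) rfl)
  let _ : TopologicalSpace X := ρ.moduleFilterBasis.topology
  have hρ : WithSeminorms ρ := ⟨rfl⟩
  have := hρ.topologicalAddGroup
  have := hρ.continuousSMul
  have := hρ.firstCountableTopology
  have hclosed := Seminorm.isClosed_closedBall_zero_iSup hbdd hρ.continuous_seminorm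
  have hcpt1 : IsCompact (q.closedBall 0 1) := hcpt.of_isClosed_subset (hclosed 1) fun x hx l =>
    (Seminorm.le_def.1 (le_ciSup (Seminorm.bddAbove_range_iff.2 hbdd) l) x).trans
      (q.mem_closedBall_zero.1 hx)
  exact @SequentialSpace.mk X (mixedTopology _ _) fun A hA =>
    isClosed_mixedTopology_of_isClosed_inter_closedBall _
      (Filter.mem_of_superset (hq.mem_of_mem one_pos) (q.ball_subset_closedBall 0 1)) hcpt1
      (isClosed_inter_closedBall_of_isSeqClosed _ (fun _ => hq.mem_iff.1) hclosed hA)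

/-- Under the hypotheses of the previous theorem, if moreover the index set `Λ` is countable,
then the mixed topology `γ[τ,τ']` is sequential. -/
theorem stmt12 {X : Type*} [AddCommGroup X] [Module ℝ X]
    {Λ : Type*} [Nonempty Λ] [Countable Λ] (ρ : SeminormFamily ℝ X Λ)
    (hbdd : ∀ x : X, BddAbove (Set.range fun l => ρ l x))
    (hsep : ∀ x : X, (∀ l, ρ l x = 0) → x = 0)
    (hcpt : @IsCompact X ρ.moduleFilterBasis.topology {x : X | ∀ l, ρ l x ≤ 1}) :
    @SequentialSpace X (mixedTopology
      (SeminormFamily.moduleFilterBasis (fun _ : Unit => (⨆ l, ρ l : Seminorm ℝ X))).topology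
      ρ.moduleFilterBasis.topology) :=
  stmt12_general ρ hbdd hcpt
end

section
/- Let H be a separable infinite-dimensional Hilbert space with orthonormal basis (ξ_n)_{n≥1}. For each n ≥ 2 let p_n be the orthogonal projection onto the closed span of {(1/n)ξ_1 + ξ_n, ξ_{n+1}, ξ_{n+2}, …}. Then: (a) p_n → 0 in the strong operator topology; (b) if (p_{n_k}) is any subsequence and (a_k) is any sequence of self-adjoint operators with ‖a_k‖ ≤ 1 and a_k ≥ p_{n_j} for all j ≥ k, then a_k ≥ p for all k, where p is the projection onto span{ξ_1}. In particular (p_n) does not order converge to 0 in the poset of self-adjoint contractions. -/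
open Filter Topology Submodule

namespace IsStarProjection

variable {A : Type*} [CStarAlgebra A] [PartialOrder A] [StarOrderedRing A]

theorem mul_eq_of_le_of_le_one_s15 {a e : A} (he : IsStarProjection e)
    (hea : e ≤ a) (ha : a ≤ 1) : a * e = e := by
  -- `0 ≤ 1 - a ≤ 1 - e`, and an element below a projection is absorbed by it
  have h := (he.one_sub.mul_right_and_mul_left_of_nonneg_of_le (sub_nonneg.2 ha)
    (sub_le_sub_left hea 1)).1
  simp only [sub_mul, mul_sub, one_mul, mul_one] at h
  rw [← sub_eq_zero] at h ⊢
  rw [← h]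
  abel

theorem le_of_mul_eq {a q : A} (hq : IsStarProjection q) (ha : 0 ≤ a)
    (haq : a * q = q) : q ≤ a := by
  have hqa : q * a = q := by
    simpa [ha.isSelfAdjoint.star_eq, hq.isSelfAdjoint.star_eq] using congr(star $haq)
  have hconj : star (1 - q) * a * (1 - q) = a - q := by
    simp only [star_sub, star_one, hq.isSelfAdjoint.star_eq, sub_mul, mul_sub, one_mul, mul_one,
      hqa, haq, hq.isIdempotentElem.eq]
    abel
  exact sub_nonneg.mp (hconj ▸ star_left_conjugate_nonneg ha _)

end IsStarProjection

theorem tendsto_apply_of_tendsto_on_span {ι 𝕜 E F : Type*} [NontriviallyNormedField 𝕜]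
    [NormedAddCommGroup E] [NormedSpace 𝕜 E] [NormedAddCommGroup F] [NormedSpace 𝕜 F]
    {l : Filter ι} {T : ι → E →L[𝕜] F} {C : ℝ} (hT : ∀ i, ‖T i‖ ≤ C) {s : Set E}
    (hs : (span 𝕜 s).topologicalClosure = ⊤) (h : ∀ x ∈ s, Tendsto (fun i => T i x) l (𝓝 0))
    (v : E) : Tendsto (fun i => T i v) l (𝓝 0) := by
  let K : Submodule 𝕜 E :=
    { carrier := {x | Tendsto (fun i => T i x) l (𝓝 0)}
      add_mem' := fun hx hy => by simpa using hx.add hy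
      zero_mem' := by simpa using tendsto_const_nhds
      smul_mem' := fun c x hx => by simpa using hx.const_smul c }
  have hK : IsClosed (K : Set E) := by
    have heq : Equicontinuous ((↑) ∘ T : ι → E → F) :=
      ((NormedSpace.equicontinuous_TFAE T).out 5 1).mp (⟨C, hT⟩ : ∃ C, ∀ i, ‖T i‖ ≤ C)
    exact heq.isClosed_setOfPred_tendsto (f := 0) continuous_const
  have hsK : (span 𝕜 s).topologicalClosure ≤ K :=
    topologicalClosure_minimal _ (span_le.mpr h) hK
  exact hsK (hs ▸ mem_top)

section TailSpan

variable (𝕜 : Type*) {E : Type*} [RCLike 𝕜] [NormedAddCommGroup E] [InnerProductSpace 𝕜 E]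

def tailSpan (b : ℕ → E) (n : ℕ) : Submodule 𝕜 E :=
  (span 𝕜 ({(n : 𝕜)⁻¹ • b 1 + b n} ∪ {x | ∃ m, n < m ∧ x = b m})).topologicalClosure

variable {𝕜} {b : ℕ → E} {n : ℕ}

theorem inv_smul_add_mem_tailSpan : (n : 𝕜)⁻¹ • b 1 + b n ∈ tailSpan 𝕜 b n :=
  le_topologicalClosure _ (subset_span (Or.inl rfl))

theorem mem_tailSpan_of_lt {m : ℕ} (hnm : n < m) : b m ∈ tailSpan 𝕜 b n :=
  le_topologicalClosure _ (subset_span (Or.inr ⟨m, hnm, rfl⟩))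

theorem eqOn_tailSpan {f g : E →L[𝕜] 𝕜}
    (he : f ((n : 𝕜)⁻¹ • b 1 + b n) = g ((n : 𝕜)⁻¹ • b 1 + b n))
    (hm : ∀ m, n < m → f (b m) = g (b m)) {x : E} (hx : x ∈ tailSpan 𝕜 b n) : f x = g x := by
  refine ContinuousLinearMap.eqOn_closure_span ?_ hx
  rintro _ (rfl | ⟨m, hnm, rfl⟩)
  exacts [he, hm m hnm]

theorem inner_eq_zero_of_mem_tailSpan (hb : Orthonormal 𝕜 b) {m : ℕ} (hm1 : m ≠ 1) (hmn : m < n)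
    {x : E} (hx : x ∈ tailSpan 𝕜 b n) : inner 𝕜 (b m) x = 0 := by
  refine eqOn_tailSpan (f := innerSL 𝕜 (b m)) (g := 0) ?_ (fun k hk => ?_) hx
  · simp [inner_add_right, inner_smul_right, orthonormal_iff_ite.mp hb, hm1, hmn.ne]
  · simp [orthonormal_iff_ite.mp hb, (hmn.trans hk).ne]

theorem inner_one_eq_of_mem_tailSpan (hb : Orthonormal 𝕜 b) (hn : 1 < n) {x : E}
    (hx : x ∈ tailSpan 𝕜 b n) : inner 𝕜 (b 1) x = (n : 𝕜)⁻¹ * inner 𝕜 (b n) x := by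
  refine eqOn_tailSpan (f := innerSL 𝕜 (b 1)) (g := (n : 𝕜)⁻¹ • innerSL 𝕜 (b n)) ?_
    (fun k hk => ?_) hx
  · simp [inner_add_right, inner_smul_right, orthonormal_iff_ite.mp hb, hb.1, hn.ne, hn.ne']
  · simp [orthonormal_iff_ite.mp hb, (hn.trans hk).ne, hk.ne]

end TailSpan

open ContinuousLinearMap in
theorem IsStarProjection.norm_apply_le {𝕜 E : Type*} [RCLike 𝕜] [NormedAddCommGroup E]
    [InnerProductSpace 𝕜 E] [CompleteSpace E] {P : E →L[𝕜] E} (hP : IsStarProjection P)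
    {y z : E} {c : 𝕜} (h : ∀ x ∈ LinearMap.range (P : E →ₗ[𝕜] E), inner 𝕜 y x = c * inner 𝕜 z x) :
    ‖P y‖ ≤ ‖c‖ * ‖z‖ := by
  have hPy : inner 𝕜 (P y) (P y) = inner 𝕜 y (P y) := by
    rw [← adjoint_inner_right, hP.isSelfAdjoint.adjoint_eq]
    exact congrArg (inner 𝕜 y) congr($(hP.isIdempotentElem.eq) y)
  have key : ‖P y‖ ^ 2 ≤ ‖c‖ * ‖z‖ * ‖P y‖ := calc
    ‖P y‖ ^ 2 = ‖inner 𝕜 (P y) (P y)‖ := by rw [inner_self_eq_norm_sq_to_K]; simp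
    _ = ‖c * inner 𝕜 z (P y)‖ := by rw [hPy, h (P y) ⟨y, rfl⟩]
    _ ≤ ‖c‖ * ‖z‖ * ‖P y‖ := by rw [norm_mul, mul_assoc]; gcongr; exact norm_inner_le_norm _ _
  nlinarith [norm_nonneg (P y), mul_nonneg (norm_nonneg c) (norm_nonneg z)]

section Projections

variable {𝕜 E : Type*} [RCLike 𝕜] [NormedAddCommGroup E] [InnerProductSpace 𝕜 E] [CompleteSpace E]
  {b : ℕ → E} {P : ℕ → E →L[𝕜] E}

theorem tendsto_apply_basis_of_range_eq_tailSpan (hb : Orthonormal 𝕜 b)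
    (hP : ∀ n, 2 ≤ n → IsStarProjection (P n))
    (hrange : ∀ n, 2 ≤ n → LinearMap.range (P n : E →ₗ[𝕜] E) = tailSpan 𝕜 b n) (m : ℕ) :
    Tendsto (fun n => P n (b m)) atTop (𝓝 0) := by
  rcases eq_or_ne m 1 with rfl | hm1
  · refine squeeze_zero_norm' ?_ tendsto_inv_atTop_nhds_zero_nat
    filter_upwards [eventually_ge_atTop 2] with n hn
    have h := (hP n hn).norm_apply_le (z := b n) fun x hx =>
      inner_one_eq_of_mem_tailSpan hb hn (hrange n hn ▸ hx)
    simpa [hb.1 n] using h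
  · refine tendsto_const_nhds.congr' ?_
    filter_upwards [eventually_gt_atTop (max m 1)] with n hn
    have h := (hP n (by omega)).norm_apply_le (c := 0) (z := 0) fun x hx => by
      simpa using inner_eq_zero_of_mem_tailSpan hb hm1 (by omega) (hrange n (by omega) ▸ hx)
    simpa [eq_comm] using h

end Projections

theorem le_of_tailSpan_projections_le {E : Type*} [NormedAddCommGroup E] [InnerProductSpace ℂ E]
    [CompleteSpace E] {b : ℕ → E} {P : ℕ → E →L[ℂ] E} (hP : ∀ n, 2 ≤ n → IsStarProjection (P n))
    (hrange : ∀ n, 2 ≤ n → LinearMap.range (P n : E →ₗ[ℂ] E) = tailSpan ℂ b n)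
    {q : E →L[ℂ] E} (hq : IsStarProjection q)
    (hqr : LinearMap.range (q : E →ₗ[ℂ] E) = span ℂ {b 1}) {a : E →L[ℂ] E} (ha : ‖a‖ ≤ 1)
    {n N : ℕ} (hn : 2 ≤ n) (hnN : n < N) (hPna : P n ≤ a) (hPNa : P N ≤ a) : q ≤ a := by
  have ha0 : 0 ≤ a := (hP n hn).nonneg.trans hPna
  have ha1 : a ≤ 1 := (CStarAlgebra.norm_le_one_iff_of_nonneg a ha0).mp ha
  have hfix : ∀ k, 2 ≤ k → P k ≤ a → ∀ x ∈ tailSpan ℂ b k, a x = x := by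
    intro k hk hPka x hx
    obtain ⟨y, rfl⟩ := (hrange k hk).symm ▸ hx
    exact congr($((hP k hk).mul_eq_of_le_of_le_one_s15 hPka ha1) y)
  have hN : (N : ℂ) ≠ 0 := by exact_mod_cast (by omega : N ≠ 0)
  have hb1 : b 1 = (N : ℂ) • ((N : ℂ)⁻¹ • b 1 + b N) - (N : ℂ) • b N := by
    rw [smul_add, smul_inv_smul₀ hN, add_sub_cancel_right]
  have hab1 : a (b 1) = b 1 := by
    conv_lhs => rw [hb1]
    rw [map_sub, map_smul, map_smul, hfix N (by omega) hPNa _ inv_smul_add_mem_tailSpan,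
      hfix n hn hPna _ (mem_tailSpan_of_lt hnN), ← hb1]
  refine hq.le_of_mul_eq ha0 (ContinuousLinearMap.ext fun y => ?_)
  obtain ⟨c, hc⟩ := mem_span_singleton.mp (hqr ▸ LinearMap.mem_range_self (q : E →ₗ[ℂ] E) y)
  change a (q y) = q y
  rw [← ContinuousLinearMap.coe_coe q, ← hc, map_smul, hab1]

/-- For the projections `p n` onto the closed span of `{(1/n)ξ₁ + ξ_n, ξ_{n+1}, …}` (with
`(ξ_n)` an orthonormal basis of a separable Hilbert space): (a) `p n → 0` strongly;
(b) any sequence of self-adjoint contractions `a k` with `a k ≥ p (n j)` for all `j ≥ k`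
(for a subsequence `n`) dominates the projection `q` onto `span {ξ₁}`; and consequently
(c) `(p n)` does not order converge to `0` in the poset of self-adjoint contractions. -/
theorem stmt15 {H : Type*} [NormedAddCommGroup H] [InnerProductSpace ℂ H] [CompleteSpace H]
    (b : HilbertBasis ℕ ℂ H) (p : ℕ → H →L[ℂ] H)
    (hproj : ∀ n, 2 ≤ n → IsIdempotentElem (p n) ∧ IsSelfAdjoint (p n))
    (hnorm : ∀ n, 2 ≤ n → ‖p n‖ ≤ 1)
    (hrange : ∀ n, 2 ≤ n → LinearMap.range ((p n : H →ₗ[ℂ] H)) =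
      (Submodule.span ℂ ({((n : ℂ))⁻¹ • b 1 + b n} ∪ {x | ∃ m, n < m ∧ x = b m})).topologicalClosure)
    (q : H →L[ℂ] H) (hqidem : IsIdempotentElem q) (hqsa : IsSelfAdjoint q)
    (hqrange : LinearMap.range ((q : H →ₗ[ℂ] H)) = Submodule.span ℂ {b 1}) :
    (∀ v : H, Filter.Tendsto (fun n => p n v) Filter.atTop (nhds 0)) ∧
    (∀ n : ℕ → ℕ, StrictMono n → (∀ k, 2 ≤ n k) →
      ∀ a : ℕ → H →L[ℂ] H, (∀ k, IsSelfAdjoint (a k) ∧ ‖a k‖ ≤ 1) →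
        (∀ k j, k ≤ j → p (n j) ≤ a k) → ∀ k, q ≤ a k) ∧
    ¬ OrderConvNet (· ≤ · : ℕ → ℕ → Prop)
      (fun k => (⟨p (k + 2), (hproj (k + 2) (by omega)).2, hnorm (k + 2) (by omega)⟩ :
        {a : H →L[ℂ] H // IsSelfAdjoint a ∧ ‖a‖ ≤ 1}))
      ⟨0, by constructor <;> simp [IsSelfAdjoint]⟩ := by
  have hP n (hn : 2 ≤ n) : IsStarProjection (p n) := ⟨(hproj n hn).1, (hproj n hn).2⟩
  have hq : IsStarProjection q := ⟨hqidem, hqsa⟩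
  have hdom : ∀ n : ℕ → ℕ, StrictMono n → (∀ k, 2 ≤ n k) →
      ∀ a : ℕ → H →L[ℂ] H, (∀ k, IsSelfAdjoint (a k) ∧ ‖a k‖ ≤ 1) →
        (∀ k j, k ≤ j → p (n j) ≤ a k) → ∀ k, q ≤ a k := fun n hn hn2 a ha hpa k =>
    le_of_tailSpan_projections_le hP hrange hq hqrange (ha k).2 (hn2 k) (hn k.lt_succ_self)
      (hpa k k le_rfl) (hpa k (k + 1) k.le_succ)
  refine ⟨fun v => ?_, hdom, ?_⟩
  · rw [← tendsto_add_atTop_iff_nat 2]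
    refine tendsto_apply_of_tendsto_on_span (fun n => hnorm (n + 2) (by omega)) b.dense_span
      ?_ v
    rintro _ ⟨m, rfl⟩
    exact (tendsto_apply_basis_of_range_eq_tailSpan b.orthonormal hP hrange m).comp
      (tendsto_add_atTop_nat 2)
  · rintro ⟨_, z, _, hz, hxz, _, hglb⟩
    have hqz : ∀ k, q ≤ z k := hdom (· + 2) (strictMono_id.add_const 2) (fun k => by omega)
      (fun k => z k) (fun k => (z k).2) fun k j hkj => (hxz j).2.trans (hz k j hkj)
    have hq_lb : (⟨q, hqsa, IsStarProjection.norm_le q hq⟩ :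
        {a : H →L[ℂ] H // IsSelfAdjoint a ∧ ‖a‖ ≤ 1}) ∈ lowerBounds (Set.range z) := by
      rintro _ ⟨k, rfl⟩
      exact hqz k
    have hq0 : q = 0 := le_antisymm (hglb.2 hq_lb) hq.nonneg
    obtain ⟨y, hy⟩ : b 1 ∈ LinearMap.range (q : H →ₗ[ℂ] H) :=
      hqrange ▸ mem_span_singleton_self _
    exact b.orthonormal.ne_zero 1 (by rw [← hy, hq0]; rfl)
end

section
/- Let M be a von Neumann algebra and (x_γ)_{γ∈Γ} a net of positive elements of M with x_γ order converging to 0 in M_sa. Then x_γ → 0 in the σ-strong topology, i.e., ψ(x_γ²) → 0 for every normal positive functional ψ on M. -/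
/-!
Write `x_γ ≤ z_γ` with `z_γ` decreasing to `0`. Normality of `ψ` gives `ψ(z_γ) → 0`, hence
`ψ(x_γ) → 0` by monotonicity. Beyond a fixed index `γ₀` the net is bounded by `z_{γ₀}`, and for
`0 ≤ x ≤ z` the C⋆-inequality `x² ≤ ‖x‖ x ≤ ‖z‖ x` yields `ψ(x_γ²) ≤ ‖z_{γ₀}‖ ψ(x_γ) → 0`.
-/

universe u

open Filter Topology
open scoped ComplexOrder

namespace CStarAlgebra

variable {A : Type*} [CStarAlgebra A] [PartialOrder A] [StarOrderedRing A]

-- Conjugate `a ≤ ‖a‖` by `√a`.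
lemma mul_self_le_norm_smul {a : A} (ha : 0 ≤ a) : a * a ≤ ‖a‖ • a := by
  set s := CFC.sqrt a
  have hs : star s = s := (CFC.sqrt_nonneg a).isSelfAdjoint.star_eq
  have hss : s * s = a := CFC.sqrt_mul_sqrt_self a ha
  have := star_left_conjugate_le_norm_smul (a := s) (b := a) ha.isSelfAdjoint
  rwa [hs, hss, ← hss, ← mul_assoc, mul_assoc (s * s), hss] at this

lemma mul_self_le_norm_smul_of_le {a b : A} (ha : 0 ≤ a) (hab : a ≤ b) : a * a ≤ ‖b‖ • a :=
  (mul_self_le_norm_smul ha).trans <|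
    smul_le_smul_of_nonneg_right (norm_le_norm_of_nonneg_of_le ha hab) ha

end CStarAlgebra

namespace StarSubalgebra

variable {A : Type*} [CStarAlgebra A] [PartialOrder A] [StarOrderedRing A]
  {S : StarSubalgebra ℂ A} [IsClosed (S : Set A)]

lemma exists_star_mul_self_eq_of_nonneg {a : S} (ha : 0 ≤ (a : A)) :
    ∃ s : S, star s * s = a := by
  have hmem : CFC.sqrt (a : A) ∈ S := by
    rw [CFC.sqrt_eq_real_sqrt (a : A) ha]
    exact cfcₙ_mem (𝕜 := ℝ) (𝕜' := ℂ) _ a.prop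
  refine ⟨⟨CFC.sqrt (a : A), hmem⟩, Subtype.ext ?_⟩
  simp [(CFC.sqrt_nonneg (a : A)).isSelfAdjoint.star_eq, CFC.sqrt_mul_sqrt_self (a : A) ha]

variable {ψ : S →ₗ[ℂ] ℂ} (hψ : ∀ a, 0 ≤ ψ (star a * a))
include hψ

lemma apply_nonneg_of_coe_nonneg {a : S} (ha : 0 ≤ (a : A)) : 0 ≤ ψ a := by
  obtain ⟨s, rfl⟩ := exists_star_mul_self_eq_of_nonneg ha
  exact hψ s

lemma apply_mono_of_coe_le {a b : S} (hab : (a : A) ≤ b) : ψ a ≤ ψ b := by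
  have := apply_nonneg_of_coe_nonneg hψ (a := b - a) (by simpa using hab)
  rwa [map_sub, sub_nonneg] at this

lemma apply_mul_self_le_norm_mul_apply {a b : S} (ha : 0 ≤ (a : A)) (hab : (a : A) ≤ b) :
    ψ (a * a) ≤ ‖(b : A)‖ * ψ a := by
  have := apply_mono_of_coe_le hψ (a := a * a) (b := ‖(b : A)‖ • a)
    (CStarAlgebra.mul_self_le_norm_smul_of_le ha hab)
  rwa [LinearMap.map_smul_of_tower, Complex.real_smul] at this

end StarSubalgebra

theorem VonNeumannAlgebra.isClosed {H : Type*} [NormedAddCommGroup H] [InnerProductSpace ℂ H]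
    [CompleteSpace H] (M : VonNeumannAlgebra H) : IsClosed (M : Set (H →L[ℂ] H)) := by
  rw [← M.centralizer_centralizer]
  exact Set.isClosed_centralizer _

lemma setOf_rel_mem_netAtTop {ι : Type*} (r : ι → ι → Prop) (i : ι) :
    {j | r i j} ∈ netAtTop r :=
  mem_iInf_of_mem i (mem_principal_self _)

/-- If a net of positive elements of a von Neumann algebra `M` order converges to `0` in the
self-adjoint part of `M`, then it converges to `0` σ-strongly, i.e. `ψ(x_γ²) → 0` for every
normal positive functional `ψ` on `M`. -/
theorem stmt17 {H : Type u} [NormedAddCommGroup H] [InnerProductSpace ℂ H] [CompleteSpace H]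
    (M : VonNeumannAlgebra H)
    (ι : Type u) (r : ι → ι → Prop)
    (hpre : IsPreorder ι r) (hdir : IsDirected ι r) (hne : Nonempty ι)
    (x : ι → H →L[ℂ] H) (hxM : ∀ γ, x γ ∈ M) (hsa : ∀ γ, IsSelfAdjoint (x γ))
    (hpos : ∀ γ, 0 ≤ x γ)
    (hconv : OrderConvNet r
      (fun γ => (⟨x γ, hxM γ, hsa γ⟩ : {a : H →L[ℂ] H // a ∈ M ∧ IsSelfAdjoint a}))
      ⟨0, zero_mem M, by simp [IsSelfAdjoint]⟩)
    (ψ : ↥M.toStarSubalgebra →ₗ[ℂ] ℂ)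
    (hψpos : ∀ a : ↥M.toStarSubalgebra,
      0 ≤ (ψ (star a * a)).re ∧ (ψ (star a * a)).im = 0)
    (hψnormal : ∀ (κ : Type u) (r' : κ → κ → Prop),
      IsPreorder κ r' → IsDirected κ r' → Nonempty κ →
      ∀ w : κ → {a : H →L[ℂ] H // a ∈ M ∧ IsSelfAdjoint a},
        (∀ i j, r' i j → w j ≤ w i) → IsGLB (Set.range w)
            ⟨0, zero_mem M, by simp [IsSelfAdjoint]⟩ →
          Filter.Tendsto (fun i => (ψ ⟨(w i).val, (w i).prop.1⟩).re) (netAtTop r') (nhds 0)) :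
    Filter.Tendsto (fun γ => (ψ ⟨x γ * x γ, mul_mem (hxM γ) (hxM γ)⟩).re)
      (netAtTop r) (nhds 0) := by
  obtain ⟨_, z, _, hz_anti, hxz, _, hz_glb⟩ := hconv
  have : IsClosed (M.toStarSubalgebra : Set (H →L[ℂ] H)) := M.isClosed
  have hψ (a : M.toStarSubalgebra) : 0 ≤ ψ (star a * a) :=
    Complex.nonneg_iff.2 ⟨(hψpos a).1, (hψpos a).2.symm⟩
  let X (γ : ι) : M.toStarSubalgebra := ⟨x γ, hxM γ⟩
  have hψX : Tendsto (fun γ => (ψ (X γ)).re) (netAtTop r) (𝓝 0) :=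
    tendsto_of_tendsto_of_tendsto_of_le_of_le tendsto_const_nhds
      (hψnormal ι r hpre hdir hne z hz_anti hz_glb)
      (fun γ => (Complex.nonneg_iff.1 (StarSubalgebra.apply_nonneg_of_coe_nonneg hψ (hpos γ))).1)
      (fun γ => (Complex.le_def.1 (StarSubalgebra.apply_mono_of_coe_le hψ (hxz γ).2)).1)
  obtain ⟨γ₀⟩ := hne
  have hbound : ∀ γ, r γ₀ γ → (ψ (X γ * X γ)).re ≤ ‖(z γ₀ : H →L[ℂ] H)‖ * (ψ (X γ)).re :=
    fun γ hγ => by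
      have hle : x γ ≤ z γ₀ := (hxz γ).2.trans (hz_anti γ₀ γ hγ)
      simpa only [Complex.re_ofReal_mul] using (Complex.le_def.1
        (StarSubalgebra.apply_mul_self_le_norm_mul_apply hψ (b := ⟨z γ₀, (z γ₀).prop.1⟩)
          (hpos γ) hle)).1
  refine tendsto_of_tendsto_of_tendsto_of_le_of_le' tendsto_const_nhds
    (by simpa only [mul_zero] using hψX.const_mul ‖(z γ₀ : H →L[ℂ] H)‖) (Eventually.of_forall fun γ => ?_)
    (eventually_of_mem (setOf_rel_mem_netAtTop r γ₀) hbound)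
  have hψXX := (hψpos (X γ)).1
  rwa [show star (X γ) = X γ from Subtype.ext (hsa γ)] at hψXX
end

section
/- Let M = B(H₂) where H₂ is a two-dimensional Hilbert space, and let (p_γ)_{γ∈Γ} be a net of projections in M that order converges to a projection p in the poset (M_sa¹, ≤) of self-adjoint contractions. Then (p_γ) is eventually constant equal to p. -/
/-!
In finite dimension the self-adjoint contractions form a norm-compact set on which the Loewner
order is closed, so an order convergent net converges in norm to the same limit: it has a cluster
point, and every cluster point lies between the increasing and the decreasing squeezing nets.
Projections have norm `0` or `1`, so a net of projections converging to `1` is eventually `1`.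
If `p ≠ 1`, some member `c ≠ 1` of the decreasing net eventually dominates the net. A contraction
fixes the range of every projection below it, and in dimension two two distinct lines span the
space, so at most one nonzero projection lies below `c`. Thus the net eventually takes values in a
finite set, and a convergent net with finitely many values is eventually equal to its limit.
-/

open Filter Topology Set Module

namespace OrderConvNet

variable {ι P : Type*} [Preorder ι] [PartialOrder P] {x : ι → P} {l : P}

theorem exists_eventually_le_of_not_le (h : OrderConvNet (· ≤ ·) x l) {u : P} (hu : ¬u ≤ l) :
    ∃ c, ¬u ≤ c ∧ ∀ᶠ i in atTop, x i ≤ c := by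
  obtain ⟨_, z, _, hz, hxz, _, hl⟩ := h
  obtain ⟨i, hi⟩ : ∃ i, ¬u ≤ z i := by
    by_contra! h
    exact hu (hl.2 (forall_mem_range.2 h))
  exact ⟨z i, hi, (eventually_ge_atTop i).mono fun j hij => (hxz j).2.trans (hz i j hij)⟩

theorem tendsto [TopologicalSpace P] [CompactSpace P] [OrderClosedTopology P]
    (h : OrderConvNet (· ≤ ·) x l) : Tendsto x atTop (𝓝 l) := by
  obtain ⟨y, z, hy, hz, hyxz, hly, hlz⟩ := h
  refine tendsto_nhds_of_unique_mapClusterPt fun m hm => le_antisymm ?_ ?_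
  · refine hlz.2 (forall_mem_range.2 fun i => isClosed_Iic.mem_of_mapClusterPt hm ?_)
    exact (eventually_ge_atTop i).mono fun j hij => (hyxz j).2.trans (hz i j hij)
  · refine hly.2 (forall_mem_range.2 fun i => isClosed_Ici.mem_of_mapClusterPt hm ?_)
    exact (eventually_ge_atTop i).mono fun j hij => (hy i j hij).trans (hyxz j).1

end OrderConvNet

theorem Filter.Tendsto.eventually_eq_of_eventually_mem_finite {α X : Type*} [TopologicalSpace X]
    [T1Space X] {f : α → X} {l : Filter α} {a : X} {S : Set X} (hf : Tendsto f l (𝓝 a))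
    (hS : S.Finite) (hfS : ∀ᶠ i in l, f i ∈ S) : ∀ᶠ i in l, f i = a := by
  have hnhds : (S \ {a})ᶜ ∈ 𝓝 a :=
    hS.sdiff.isClosed.isOpen_compl.mem_nhds fun h => h.2 rfl
  have : ∀ᶠ i in l, f i ∉ S \ {a} := hf.eventually hnhds
  filter_upwards [hfS, this] with i hi hi'
  by_contra hne
  exact hi' ⟨hi, hne⟩

theorem Submodule.eq_of_sup_ne_top_of_finrank_eq_two {K V : Type*} [DivisionRing K]
    [AddCommGroup V] [Module K V] (hV : finrank K V = 2) {U W : Submodule K V} (hU : U ≠ ⊥)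
    (hW : W ≠ ⊥) (hUW : U ⊔ W ≠ ⊤) : U = W := by
  have : FiniteDimensional K V := .of_finrank_eq_succ hV
  have hlt : finrank K ↥(U ⊔ W) < 2 := hV ▸ Submodule.finrank_lt hUW
  have hpos : ∀ T : Submodule K V, T ≠ ⊥ → 1 ≤ finrank K T := fun T hT =>
    Nat.one_le_iff_ne_zero.2 fun h => hT (Submodule.finrank_eq_zero.1 h)
  have hU' : U = U ⊔ W := Submodule.eq_of_le_of_finrank_le le_sup_left (by linarith [hpos U hU])
  have hW' : W = U ⊔ W := Submodule.eq_of_le_of_finrank_le le_sup_right (by linarith [hpos W hW])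
  exact hU'.trans hW'.symm

instance IsSelfAdjoint.compactSpace_closedBall {A : Type*} [NormedRing A] [StarRing A]
    [ContinuousStar A] [ProperSpace A] :
    CompactSpace {a : A // IsSelfAdjoint a ∧ ‖a‖ ≤ 1} := by
  have : {a : A | IsSelfAdjoint a ∧ ‖a‖ ≤ 1} = {a | star a = a} ∩ Metric.closedBall 0 1 := by
    ext a
    simp [IsSelfAdjoint]
  have hK : IsCompact {a : A | IsSelfAdjoint a ∧ ‖a‖ ≤ 1} := this ▸
    (isCompact_closedBall (0 : A) 1).inter_left (isClosed_eq continuous_star continuous_id)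
  exact isCompact_iff_compactSpace.1 hK

theorem IsStarProjection.eq_zero_of_norm_lt_one {E : Type*} [NonUnitalNormedRing E] [StarRing E]
    [CStarRing E] {e : E} (he : IsStarProjection e) (h : ‖e‖ < 1) : e = 0 := by
  have : ‖e‖ * (‖e‖ - 1) = 0 := by
    simp [mul_sub, ← CStarRing.norm_star_mul_self, he.isSelfAdjoint.star_eq,
      he.isIdempotentElem.eq]
  rcases mul_eq_zero.1 this with h0 | h1
  · exact norm_eq_zero.1 h0
  · linarith

section CStarAlgebra

variable {A : Type*} [CStarAlgebra A] [PartialOrder A] [StarOrderedRing A]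

theorem IsStarProjection.mul_eq_self_of_le_of_le_one {c e : A} (he : IsStarProjection e)
    (hec : e ≤ c) (hc : c ≤ 1) : c * e = e := by
  have h := (he.one_sub.mul_right_and_mul_left_of_nonneg_of_le (sub_nonneg.2 hc)
    (sub_le_sub_left hec 1)).1
  rw [mul_sub, mul_one, sub_eq_self, sub_mul, one_mul, sub_eq_zero] at h
  exact h.symm

theorem IsSelfAdjoint.le_one_of_norm_le_one {a : A} (ha : IsSelfAdjoint a) (h : ‖a‖ ≤ 1) :
    a ≤ 1 := by
  simpa using ha.le_algebraMap_norm_self.trans (algebraMap_mono A h)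

end CStarAlgebra

section Operator

variable {H : Type*} [NormedAddCommGroup H] [InnerProductSpace ℂ H] [CompleteSpace H]

theorem ContinuousLinearMap.IsStarProjection.eq_of_le_of_le (hH : finrank ℂ H = 2)
    {c e f : H →L[ℂ] H} (he : IsStarProjection e) (hf : IsStarProjection f) (he0 : e ≠ 0)
    (hf0 : f ≠ 0) (hec : e ≤ c) (hfc : f ≤ c) (hc : c ≤ 1) (hc1 : c ≠ 1) : e = f := by
  have hcoe (g : H →L[ℂ] H) : (g : H →ₗ[ℂ] H) = 0 ↔ g = 0 := by
    rw [← ContinuousLinearMap.toLinearMap_zero, ContinuousLinearMap.coe_inj]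
  have hfix (g : H →L[ℂ] H) (hg : IsStarProjection g) (hgc : g ≤ c) :
      LinearMap.range (g : H →ₗ[ℂ] H) ≤ LinearMap.ker ((c - 1 : H →L[ℂ] H) : H →ₗ[ℂ] H) := by
    rw [LinearMap.range_le_ker_iff]
    have h0 : (c - 1) * g = 0 := by
      rw [sub_mul, one_mul, hg.mul_eq_self_of_le_of_le_one hgc hc, sub_self]
    exact congrArg ContinuousLinearMap.toLinearMap h0
  refine (IsStarProjection.ext_iff he hf).2 <|
    Submodule.eq_of_sup_ne_top_of_finrank_eq_two hH ?_ ?_ fun htop => hc1 ?_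
  · rwa [Ne, LinearMap.range_eq_bot, hcoe]
  · rwa [Ne, LinearMap.range_eq_bot, hcoe]
  · have : LinearMap.ker ((c - 1 : H →L[ℂ] H) : H →ₗ[ℂ] H) = ⊤ :=
      top_unique (htop ▸ sup_le (hfix e he hec) (hfix f hf hfc))
    rwa [LinearMap.ker_eq_top, hcoe, sub_eq_zero] at this

theorem finite_setOf_isStarProjection_le (hH : finrank ℂ H = 2) {c : H →L[ℂ] H} (hc : c ≤ 1)
    (hc1 : c ≠ 1) : {e | IsStarProjection e ∧ e ≤ c}.Finite := by
  refine Set.Finite.of_sdiff (t := {0}) (Set.Subsingleton.finite fun e he f hf => ?_)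
    (Set.finite_singleton 0)
  exact ContinuousLinearMap.IsStarProjection.eq_of_le_of_le hH he.1.1 hf.1.1 he.2 hf.2 he.1.2
    hf.1.2 hc hc1

end Operator

/-- In `B(H₂)` with `H₂` two-dimensional, a net of projections order converging to a projection
`p` in the poset of self-adjoint contractions is eventually constant equal to `p`. -/
theorem stmt19 {H : Type*} [NormedAddCommGroup H] [InnerProductSpace ℂ H] [CompleteSpace H]
    (hdim : Module.finrank ℂ H = 2)
    (ι : Type*) (r : ι → ι → Prop)
    (hpre : IsPreorder ι r) (hdir : IsDirected ι r) (hne : Nonempty ι)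
    (q : ι → H →L[ℂ] H) (hq : ∀ γ, IsIdempotentElem (q γ) ∧ IsSelfAdjoint (q γ))
    (hqn : ∀ γ, ‖q γ‖ ≤ 1)
    (p : H →L[ℂ] H) (hp : IsIdempotentElem p ∧ IsSelfAdjoint p) (hpn : ‖p‖ ≤ 1)
    (hconv : OrderConvNet r
      (fun γ => (⟨q γ, (hq γ).2, hqn γ⟩ : {a : H →L[ℂ] H // IsSelfAdjoint a ∧ ‖a‖ ≤ 1}))
      ⟨p, hp.2, hpn⟩) :
    ∃ γ₀ : ι, ∀ γ, r γ₀ γ → q γ = p := by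
  let : Preorder ι := { le := r, le_refl := hpre.refl, le_trans := hpre.trans }
  have : IsDirectedOrder ι := hdir
  have : FiniteDimensional ℂ H := .of_finrank_eq_succ hdim
  have hproj (γ : ι) : IsStarProjection (q γ) := ⟨(hq γ).1, (hq γ).2⟩
  have hlim := hconv.tendsto
  suffices ∀ᶠ γ in atTop, q γ = p from eventually_atTop.1 this
  by_cases hp1 : p = 1
  · subst hp1
    have : Tendsto q atTop (𝓝 1) := (continuous_subtype_val.tendsto _).comp hlim
    filter_upwards [Metric.tendsto_nhds.1 this 1 one_pos] with γ hγ
    rw [dist_eq_norm, norm_sub_rev] at hγ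
    exact (sub_eq_zero.1 ((hproj γ).one_sub.eq_zero_of_norm_lt_one hγ)).symm
  · obtain ⟨c, hc1, hqc⟩ := hconv.exists_eventually_le_of_not_le
      (u := ⟨1, .one _, ContinuousLinearMap.norm_id_le⟩)
      fun h => hp1 (le_antisymm (hp.2.le_one_of_norm_le_one hpn) h)
    have hS : {a : {a : H →L[ℂ] H // IsSelfAdjoint a ∧ ‖a‖ ≤ 1} |
        IsStarProjection a.1 ∧ a ≤ c}.Finite :=
      (finite_setOf_isStarProjection_le hdim (c.2.1.le_one_of_norm_le_one c.2.2)
        fun h => hc1 h.ge).preimage Subtype.val_injective.injOn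
    filter_upwards [hlim.eventually_eq_of_eventually_mem_finite hS
      (hqc.mono fun γ h => ⟨hproj γ, h⟩)] with γ h
    exact congrArg Subtype.val h
end
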